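/- arXiv:1801.02923 — 6 statements merged into one kernel-verified Lean document; each statement's English description precedes it below -/
import Mathlib

section
/- If D is a k-partially colored Gauss diagram obtained from an initial coloring of k seed strands by a sequence of coloring moves, then at every stage of the coloring process, the set of strands assigned any fixed color forms a connected union of strands (i.e., consecutive strands along a circle component). -/
/-- An abstract Gauss diagram: a finite collection of circles, each circle `c`
carrying `heads c` arrowheads which divide it into `heads c` strands (in cyclic
order); each chord has its arrowhead at one of these positions (bijectively),
its arrowtail on some strand, and a sign. -/
structure GaussDiagram where
  circles : ℕ
  heads : Fin circles → ℕ
  chords : ℕ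
  headPos : Fin chords → (c : Fin circles) × Fin (heads c)
  headBij : Function.Bijective headPos
  tail : Fin chords → (c : Fin circles) × Fin (heads c)
  sign : Fin chords → Bool

namespace GaussDiagram

variable (D : GaussDiagram)

/-- A strand: the arc of circle `c` beginning just after arrowhead `i`. -/
abbrev Strand := (c : Fin D.circles) × Fin (D.heads c)

noncomputable def nStrands : ℕ := Nat.card D.Strand

/-- The next strand along the circle (across one arrowhead). -/
def next (s : D.Strand) : D.Strand :=
  ⟨s.1, ⟨(s.2.val + 1) % D.heads s.1, Nat.mod_lt _ (Nat.lt_of_le_of_lt (Nat.zero_le _) s.2.isLt)⟩⟩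

/-- The strand on one side of the arrowhead of chord `p`. -/
def src (p : Fin D.chords) : D.Strand := D.headPos p
/-- The strand on the other side of the arrowhead of chord `p`. -/
def dst (p : Fin D.chords) : D.Strand := D.next (D.src p)

/-- Two strands are adjacent if they are separated by an arrowhead. -/
def Adjacent (s t : D.Strand) : Prop :=
  ∃ p : Fin D.chords, (D.src p = s ∧ D.dst p = t) ∨ (D.src p = t ∧ D.dst p = s)

/-- An overbridge is a strand containing at least one arrowtail. -/
def IsOverbridge (s : D.Strand) : Prop := ∃ p : Fin D.chords, D.tail p = s

/-- The bridge number of the diagram: the number of overbridges. -/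
noncomputable def vb : ℕ := Nat.card {s : D.Strand // D.IsOverbridge s}

/-- Cut-split: some circle has no chords, or two strands adjacent at an
arrowhead coincide. -/
def CutSplit : Prop :=
  (∃ c : Fin D.circles, D.heads c = 0) ∨ ∃ p : Fin D.chords, D.src p = D.dst p

/-- A `k`-meridional coloring of `D`, recorded by its coloring sequence:
`seq` enumerates the strands in the order they are colored, the first `k` being
the seed strands (with the `k` distinct colors `0, …, k-1`), and each later
strand receives its color through a coloring move: there is a chord `p` whose
arrowhead separates it from a previously colored strand of the same color, and
whose arrowtail lies on a previously colored strand. -/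
structure MerColoring (k : ℕ) where
  seq : Fin D.nStrands → D.Strand
  bij : Function.Bijective seq
  col : Fin D.nStrands → Fin k
  seed_col : ∀ (i : Fin D.nStrands) (h : i.val < k), col i = ⟨i.val, h⟩
  move : ∀ i : Fin D.nStrands, k ≤ i.val →
    ∃ (p : Fin D.chords) (l r : Fin D.nStrands), l < i ∧ r < i ∧
      ((D.src p = seq l ∧ D.dst p = seq i) ∨ (D.src p = seq i ∧ D.dst p = seq l)) ∧
      D.tail p = seq r ∧ col i = col l

variable {D}

/-- The position of a strand in the coloring sequence. -/
noncomputable def MerColoring.idx {k : ℕ} (mc : D.MerColoring k) (s : D.Strand) :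
    Fin D.nStrands :=
  (Equiv.ofBijective mc.seq mc.bij).symm s

/-- The height function `h(α_j) = 1/(j+1)` (zero-indexed: `1/(j+2)`). -/
noncomputable def MerColoring.height {k : ℕ} (mc : D.MerColoring k) (s : D.Strand) : ℚ :=
  1 / ((mc.idx s : ℕ) + 2)

/-- The final color of a strand. -/
noncomputable def MerColoring.colorOf {k : ℕ} (mc : D.MerColoring k) (s : D.Strand) : Fin k :=
  mc.col (mc.idx s)

variable (D)

/-- The Wirtinger number: the least `k` for which `D` is `k`-meridionally
colorable. -/
noncomputable def wirt : ℕ := sInf {k | Nonempty (D.MerColoring k)}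

/-- A single coloring move on partial colorings: extend a color across the
arrowhead of a chord whose arrowtail lies on an already colored strand. -/
def ColoringMove {k : ℕ} (f g : D.Strand → Option (Fin k)) : Prop :=
  ∃ (p : Fin D.chords) (ap aq : D.Strand),
    ((D.src p = ap ∧ D.dst p = aq) ∨ (D.src p = aq ∧ D.dst p = ap)) ∧
    (f (D.tail p)).isSome ∧ (f ap).isSome ∧ f aq = none ∧
    g = Function.update f aq (f ap)

/-- A set of strands is connected if any two of its members are joined by a
path of adjacent strands inside the set. -/
def ConnectedStrands (A : Set D.Strand) : Prop :=
  ∀ s ∈ A, ∀ t ∈ A,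
    Relation.ReflTransGen (fun x y => x ∈ A ∧ y ∈ A ∧ D.Adjacent x y) s t

end GaussDiagram

namespace GaussDiagram

open Relation

variable {D : GaussDiagram}

theorem Adjacent.symm {s t : D.Strand} (h : D.Adjacent s t) : D.Adjacent t s :=
  let ⟨p, hp⟩ := h; ⟨p, hp.symm⟩

theorem connectedStrands_of_subsingleton {A : Set D.Strand} (hA : A.Subsingleton) :
    D.ConnectedStrands A := by
  intro s hs t ht
  rw [hA hs ht]

theorem ConnectedStrands.insert_of_adjacent {A : Set D.Strand} (hA : D.ConnectedStrands A)
    {ap aq : D.Strand} (hap : ap ∈ A) (hadj : D.Adjacent ap aq) :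
    D.ConnectedStrands (insert aq A) := by
  set R := fun x y => x ∈ insert aq A ∧ y ∈ insert aq A ∧ D.Adjacent x y
  have from_ap : ∀ s ∈ insert aq A, ReflTransGen R ap s := by
    rintro s (rfl | hs)
    · exact .single ⟨.inr hap, .inl rfl, hadj⟩
    · exact ReflTransGen.mono (fun x y ⟨hx, hy, h⟩ => ⟨.inr hx, .inr hy, h⟩) _ _
        (hA ap hap s hs)
  have to_ap : ∀ s ∈ insert aq A, ReflTransGen R s ap := fun s hs =>
    ReflTransGen.mono (fun x y ⟨hx, hy, h⟩ => ⟨hy, hx, h.symm⟩) _ _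
      (reflTransGen_swap.mpr (from_ap s hs))
  intro s hs t ht
  exact (to_ap s hs).trans (from_ap t ht)

/-- A coloring move enlarges the class of the color it extends by one strand adjacent to it
and leaves the other color classes unchanged. -/
theorem ColoringMove.connectedStrands_colorClass {k : ℕ} {f g : D.Strand → Option (Fin k)}
    (hfg : D.ColoringMove f g) (hf : ∀ μ, D.ConnectedStrands {s | f s = some μ}) (μ : Fin k) :
    D.ConnectedStrands {s | g s = some μ} := by
  obtain ⟨p, ap, aq, hp, -, hap, haq, rfl⟩ := hfg
  obtain ⟨ν, hν⟩ := Option.isSome_iff_exists.mp hap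
  by_cases hνμ : ν = μ
  · subst hνμ
    have hclass : {s | Function.update f aq (f ap) s = some ν} = insert aq {s | f s = some ν} := by
      ext s
      by_cases hs : s = aq <;> simp [Function.update_apply, hs, hν]
    rw [hclass]
    exact (hf ν).insert_of_adjacent hν ⟨p, hp⟩
  · have hclass : {s | Function.update f aq (f ap) s = some μ} = {s | f s = some μ} := by
      ext s
      by_cases hs : s = aq <;> simp [Function.update_apply, hs, hν, haq, hνμ]
    rw [hclass]
    exact hf μ

end GaussDiagram

open GaussDiagram in
/-- If a partial coloring assigning distinct colors to some strands is extended
by a sequence of coloring moves, then at every stage the set of strands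
assigned any fixed color is a connected union of strands. -/
theorem color_classes_connected (D : GaussDiagram) (k : ℕ)
    (f : ℕ → D.Strand → Option (Fin k)) (m : ℕ)
    (hseed : ∀ μ : Fin k, {s : D.Strand | f 0 s = some μ}.Subsingleton)
    (hmoves : ∀ j < m, D.ColoringMove (f j) (f (j + 1))) :
    ∀ j ≤ m, ∀ μ : Fin k, D.ConnectedStrands {s : D.Strand | f j s = some μ} := by
  intro j
  induction j with
  | zero => exact fun _ μ => connectedStrands_of_subsingleton (hseed μ)
  | succ j ih =>
    intro hj
    exact (hmoves j hj).connectedStrands_colorClass (ih (j.le_succ.trans hj))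
end

section
/- Let D be a Gauss diagram of a nontrivial virtual knot (a single circle component, with no two strands adjacent at an arrowhead being equal). Suppose D is k-meridionally colorable with height function h, a chord c_p has arrowhead separating strands a_p and a_q and arrowtail on strand a_r, and a_p, a_q receive the same color at the end of the coloring process. If h(a_r) ≤ min{h(a_p), h(a_q)}, then k may be taken to be 1 (the Wirtinger number of D is 1) and c_p is the unique chord with this property. -/
open GaussDiagram in
/-- Lemma 3.1: Let `D` be a Gauss diagram of a nontrivial virtual knot that is
`k`-meridionally colored, and let `p` be a chord whose arrowhead separates two
strands that receive the same final color.  If the strand carrying the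
arrowtail of `p` has height at most the minimum of their heights, then the
Wirtinger number of `D` is `1`, and `p` is the unique chord with this height
property. -/
theorem wirtinger_one_of_low_tail (D : GaussDiagram) (hknot : D.circles = 1)
    (hchord : 0 < D.chords) (hnontriv : ∀ q : Fin D.chords, D.src q ≠ D.dst q)
    (k : ℕ) (mc : D.MerColoring k) (p : Fin D.chords)
    (hsame : mc.colorOf (D.src p) = mc.colorOf (D.dst p))
    (hh : mc.height (D.tail p) ≤ min (mc.height (D.src p)) (mc.height (D.dst p))) :
    D.wirt = 1 ∧
    ∀ q : Fin D.chords,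
      mc.height (D.tail q) ≤ min (mc.height (D.src q)) (mc.height (D.dst q)) → q = p := by
  classical
  have hnc : D.nStrands = D.chords := by
    have h := Fintype.card_of_bijective D.headBij
    simp only [Fintype.card_fin] at h
    simp only [GaussDiagram.nStrands, Nat.card_eq_fintype_card]
    exact h.symm
  have hn0 : 0 < D.nStrands := hnc ▸ hchord
  have seq_idx : ∀ s, mc.seq (mc.idx s) = s := fun s =>
    (Equiv.ofBijective mc.seq mc.bij).apply_symm_apply s
  have idx_seq : ∀ i, mc.idx (mc.seq i) = i := fun i =>
    (Equiv.ofBijective mc.seq mc.bij).symm_apply_apply i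
  have colorOf_seq : ∀ i, mc.colorOf (mc.seq i) = mc.col i := by
    intro i; simp [GaussDiagram.MerColoring.colorOf, idx_seq]
  have hle : ∀ s t : D.Strand,
      mc.height s ≤ mc.height t ↔ (mc.idx t : ℕ) ≤ (mc.idx s : ℕ) := by
    intro s t
    simp only [GaussDiagram.MerColoring.height]
    rw [one_div_le_one_div (by positivity) (by positivity), add_le_add_iff_right, Nat.cast_le]
  choose q l r hlt hrt hside htail hcol using mc.move
  have hGood : ∀ c : Fin D.chords,
      mc.height (D.tail c) ≤ min (mc.height (D.src c)) (mc.height (D.dst c)) →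
      ∀ (i : Fin D.nStrands) (hi : k ≤ i.val), q i hi ≠ c := by
    intro c hc i hi e
    have h1 : (mc.idx (D.src c) : ℕ) ≤ (mc.idx (D.tail c) : ℕ) :=
      (hle _ _).mp (le_min_iff.mp hc).1
    have h2 : (mc.idx (D.dst c) : ℕ) ≤ (mc.idx (D.tail c) : ℕ) :=
      (hle _ _).mp (le_min_iff.mp hc).2
    have ht : mc.idx (D.tail c) = r i hi := by rw [← e, htail i hi, idx_seq]
    have hr : (r i hi : ℕ) < i.val := hrt i hi
    have hside' := hside i hi
    rw [e] at hside'
    rcases hside' with ⟨_, hd⟩ | ⟨hs, _⟩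
    · have hdx : mc.idx (D.dst c) = i := by rw [hd, idx_seq]
      rw [hdx, ht] at h2; omega
    · have hsx : mc.idx (D.src c) = i := by rw [hs, idx_seq]
      rw [hsx, ht] at h1; omega
  have qInj : ∀ (i : Fin D.nStrands) (hi : k ≤ i.val) (j : Fin D.nStrands) (hj : k ≤ j.val),
      q i hi = q j hj → i = j := by
    intro i hi j hj e
    by_contra hne
    have hinj := mc.bij.1
    have hsj := hside j hj
    rw [← e] at hsj
    rcases hside i hi with ⟨hi1, hi2⟩ | ⟨hi1, hi2⟩ <;> rcases hsj with ⟨hj1, hj2⟩ | ⟨hj1, hj2⟩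
    · exact hne (hinj (hi2.symm.trans hj2))
    · have e1 : (l i hi).val = j.val := congrArg Fin.val (hinj (hi1.symm.trans hj1))
      have e2 : i.val = (l j hj).val := congrArg Fin.val (hinj (hi2.symm.trans hj2))
      have h1 : (l i hi).val < i.val := hlt i hi
      have h2 : (l j hj).val < j.val := hlt j hj
      omega
    · have e1 : i.val = (l j hj).val := congrArg Fin.val (hinj (hi1.symm.trans hj1))
      have e2 : (l i hi).val = j.val := congrArg Fin.val (hinj (hi2.symm.trans hj2))
      have h1 : (l i hi).val < i.val := hlt i hi
      have h2 : (l j hj).val < j.val := hlt j hj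
      omega
    · exact hne (hinj (hi1.symm.trans hj1))
  have usedEq : ∀ (i : Fin D.nStrands) (hi : k ≤ i.val),
      mc.colorOf (D.src (q i hi)) = mc.colorOf (D.dst (q i hi)) := by
    intro i hi
    rcases hside i hi with ⟨h1, h2⟩ | ⟨h1, h2⟩
    · rw [h1, h2, colorOf_seq, colorOf_seq]; exact (hcol i hi).symm
    · rw [h1, h2, colorOf_seq, colorOf_seq]; exact hcol i hi
  have hk0 : k ≠ 0 := by
    intro h; subst h
    exact (mc.col ⟨0, hn0⟩).elim0
  have hkn : k < D.nStrands := by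
    by_contra hcon
    push_neg at hcon
    have e1 := mc.seed_col (mc.idx (D.src p)) (lt_of_lt_of_le (mc.idx (D.src p)).isLt hcon)
    have e2 := mc.seed_col (mc.idx (D.dst p)) (lt_of_lt_of_le (mc.idx (D.dst p)).isLt hcon)
    have hsame' := hsame
    simp only [GaussDiagram.MerColoring.colorOf] at hsame'
    rw [e1, e2] at hsame'
    have hv : (mc.idx (D.src p)).val = (mc.idx (D.dst p)).val := by
      simpa [Fin.mk.injEq] using hsame'
    have : D.src p = D.dst p := by
      rw [← seq_idx (D.src p), ← seq_idx (D.dst p)]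
      exact congrArg mc.seq (Fin.ext hv)
    exact hnontriv p this
  have hk1 : k = 1 := by
    by_contra hk1
    have hk2 : 2 ≤ k := by omega
    have hnext_iter : ∀ (c : Fin D.circles) (x : Fin (D.heads c)) (m : ℕ),
        D.next^[m] ⟨c, x⟩ =
          ⟨c, ⟨(x.val + m) % D.heads c,
            Nat.mod_lt _ (Nat.lt_of_le_of_lt (Nat.zero_le _) x.isLt)⟩⟩ := by
      intro c x m
      induction m with
      | zero =>
        exact congrArg (Sigma.mk c) (Fin.ext (by simp [Nat.mod_eq_of_lt x.isLt]))
      | succ m ih =>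
        rw [Function.iterate_succ_apply', ih]
        simp only [GaussDiagram.next]
        exact congrArg (Sigma.mk c) (Fin.ext (by
          show ((x.val + m) % D.heads c + 1) % D.heads c = (x.val + (m + 1)) % D.heads c
          rw [Nat.mod_add_mod, Nat.add_assoc]))
    have reach : ∀ s t : D.Strand, ∃ m, D.next^[m] s = t := by
      rintro ⟨cs, x⟩ ⟨ct, y⟩
      have hc : cs = ct := by
        have h1 : cs.val < 1 := lt_of_lt_of_le cs.isLt (le_of_eq hknot)
        have h2 : ct.val < 1 := lt_of_lt_of_le ct.isLt (le_of_eq hknot)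
        exact Fin.ext (by omega)
      subst hc
      refine ⟨D.heads cs - x.val + y.val, ?_⟩
      rw [hnext_iter]
      refine congrArg (Sigma.mk cs) (Fin.ext ?_)
      show (x.val + (D.heads cs - x.val + y.val)) % D.heads cs = y.val
      have hx := x.isLt; have hy := y.isLt
      have harith : x.val + (D.heads cs - x.val + y.val) = D.heads cs + y.val := by omega
      rw [harith, Nat.add_mod_left, Nat.mod_eq_of_lt hy]
    have hpsiex : ∀ j : Fin k, ∃ c : Fin D.chords,
        mc.colorOf (D.src c) = j ∧ mc.colorOf (D.src c) ≠ mc.colorOf (D.dst c) := by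
      intro j
      by_contra hcon
      push_neg at hcon
      have step : ∀ s : D.Strand, mc.colorOf s = j → mc.colorOf (D.next s) = j := by
        intro s hs
        obtain ⟨c, hc⟩ := D.headBij.2 s
        have hsrc : D.src c = s := hc
        have heq := hcon c (by rw [hsrc]; exact hs)
        have hdj : mc.colorOf (D.dst c) = j := by rw [← heq, hsrc]; exact hs
        rw [GaussDiagram.dst, hsrc] at hdj
        exact hdj
      have hjlt : (j : ℕ) < D.nStrands := lt_trans j.isLt hkn
      have hs0 : mc.colorOf (mc.seq ⟨j.val, hjlt⟩) = j := by
        rw [colorOf_seq, mc.seed_col ⟨j.val, hjlt⟩ j.isLt]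
      have iter : ∀ m, mc.colorOf (D.next^[m] (mc.seq ⟨j.val, hjlt⟩)) = j := by
        intro m
        induction m with
        | zero => simpa using hs0
        | succ m ih => rw [Function.iterate_succ_apply']; exact step _ ih
      obtain ⟨j2, hj2⟩ : ∃ j2 : Fin k, j2 ≠ j := by
        rcases Nat.eq_zero_or_pos j.val with h | h
        · exact ⟨⟨1, hk2⟩, by intro e; have := congrArg Fin.val e; simp at this; omega⟩
        · exact ⟨⟨0, by omega⟩, by intro e; have := congrArg Fin.val e; simp at this; omega⟩
      have hj2lt : (j2 : ℕ) < D.nStrands := lt_trans j2.isLt hkn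
      have hs1 : mc.colorOf (mc.seq ⟨j2.val, hj2lt⟩) = j2 := by
        rw [colorOf_seq, mc.seed_col ⟨j2.val, hj2lt⟩ j2.isLt]
      obtain ⟨m, hm⟩ := reach (mc.seq ⟨j.val, hjlt⟩) (mc.seq ⟨j2.val, hj2lt⟩)
      have hj := iter m
      rw [hm] at hj
      exact hj2 (hs1.symm.trans hj)
    choose psi hpsi1 hpsi2 using hpsiex
    have PhiInj : Function.Injective (Sum.elim
        (fun j : Fin (D.nStrands - k) =>
          q ⟨k + j.val, by have := j.isLt; omega⟩ (Nat.le_add_right _ _))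
        (Sum.elim psi (fun _ : Unit => p))) := by
      rintro (a | b | c) (a' | b' | c') h <;>
        simp only [Sum.elim_inl, Sum.elim_inr] at h
      · have := congrArg Fin.val (qInj _ _ _ _ h)
        simp only [] at this
        exact congrArg Sum.inl (Fin.ext (by omega))
      · exact absurd (h ▸ usedEq _ _) (hpsi2 b')
      · exact absurd h (hGood p hh _ _)
      · exact absurd (h.symm ▸ usedEq _ _) (hpsi2 b)
      · have : b = b' := by rw [← hpsi1 b, ← hpsi1 b', h]
        exact congrArg Sum.inr (congrArg Sum.inl this)
      · exact absurd hsame (h ▸ hpsi2 b)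
      · exact absurd h.symm (hGood p hh _ _)
      · exact absurd hsame (h.symm ▸ hpsi2 b')
      · exact congrArg Sum.inr (congrArg Sum.inr rfl)
    have hcard := Fintype.card_le_of_injective _ PhiInj
    simp only [Fintype.card_sum, Fintype.card_fin, Fintype.card_unit] at hcard
    omega
  subst hk1
  have hpgood := hGood p hh
  constructor
  · have h1 : (1 : ℕ) ∈ {k | Nonempty (D.MerColoring k)} := ⟨mc⟩
    have h0 : (0 : ℕ) ∉ {k | Nonempty (D.MerColoring k)} := by
      rintro ⟨mc0⟩
      exact (mc0.col ⟨0, hn0⟩).elim0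
    have hmem := Nat.sInf_mem (⟨1, h1⟩ : {k | Nonempty (D.MerColoring k)}.Nonempty)
    have hle1 := Nat.sInf_le h1
    simp only [GaussDiagram.wirt]
    rcases Nat.eq_zero_or_pos (sInf {k | Nonempty (D.MerColoring k)}) with h | h
    · exact absurd (h ▸ hmem) h0
    · omega
  · intro q' hq'
    by_contra hne
    have hq'good := hGood q' hq'
    have inj2 : Function.Injective (Sum.elim
        (fun j : Fin (D.nStrands - 1) =>
          q ⟨1 + j.val, by have := j.isLt; omega⟩ (Nat.le_add_right _ _))
        (Sum.elim (fun _ : Unit => p) (fun _ : Unit => q'))) := by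
      rintro (a | b | c) (a' | b' | c') h <;>
        simp only [Sum.elim_inl, Sum.elim_inr] at h
      · have := congrArg Fin.val (qInj _ _ _ _ h)
        simp only [] at this
        exact congrArg Sum.inl (Fin.ext (by omega))
      · exact absurd h (hpgood _ _)
      · exact absurd h (hq'good _ _)
      · exact absurd h.symm (hpgood _ _)
      · exact congrArg Sum.inr (congrArg Sum.inl rfl)
      · exact absurd h.symm hne
      · exact absurd h.symm (hq'good _ _)
      · exact absurd h hne
      · exact congrArg Sum.inr (congrArg Sum.inr rfl)
    have hcard := Fintype.card_le_of_injective _ inj2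
    simp only [Fintype.card_sum, Fintype.card_fin, Fintype.card_unit] at hcard
    omega
end

section
/- Let D be a Gauss diagram that is not cut-split, k-meridionally colored with height function h. Suppose a chord c_p has arrowhead separating strands a_p and a_q and arrowtail on strand a_r, and a_p and a_q receive the same color j. Then either h(a_r) > min{h(a_p), h(a_q)}, or the strands assigned color j form exactly one entire circle component U of D and c_p is the unique chord with arrowhead on U satisfying h(a_r) ≤ min{h(a_p), h(a_q)}. -/
namespace GaussDiagram

variable {D : GaussDiagram}

lemma strand_ext {s t : D.Strand} (h1 : s.1 = t.1) (h2 : s.2.val = t.2.val) : s = t := by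
  obtain ⟨c1, v1⟩ := s
  obtain ⟨c2, v2⟩ := t
  dsimp at h1 h2
  subst h1
  exact congrArg _ (Fin.val_injective h2)

lemma heads_pos (s : D.Strand) : 0 < D.heads s.1 := s.2.pos

lemma next_fst (s : D.Strand) : (D.next s).1 = s.1 := rfl

lemma next_val (s : D.Strand) : (D.next s).2.val = (s.2.val + 1) % D.heads s.1 := rfl

lemma iter_fst (a : ℕ) (s : D.Strand) : (D.next^[a] s).1 = s.1 := by
  induction a with
  | zero => rfl
  | succ n ih => rw [Function.iterate_succ_apply', next_fst, ih]

lemma iter_val (a : ℕ) (s : D.Strand) :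
    (D.next^[a] s).2.val = (s.2.val + a) % D.heads s.1 := by
  induction a with
  | zero => simp [Nat.mod_eq_of_lt s.2.isLt]
  | succ n ih =>
    have h1 : D.heads ((D.next^[n] s).1) = D.heads s.1 := by rw [iter_fst]
    rw [Function.iterate_succ_apply', next_val, ih, h1, Nat.mod_add_mod, Nat.add_assoc]

lemma iter_heads (s : D.Strand) : D.next^[D.heads s.1] s = s := by
  refine strand_ext (iter_fst _ _) ?_
  rw [iter_val, Nat.add_mod_right, Nat.mod_eq_of_lt s.2.isLt]

lemma next_inj : Function.Injective D.next := by
  intro s t h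
  have hf : s.1 = t.1 := by rw [← next_fst (s := s), h, next_fst]
  have hs : D.next^[D.heads s.1 - 1] (D.next s) = s := by
    have : D.heads s.1 - 1 + 1 = D.heads s.1 := Nat.succ_pred_eq_of_pos (heads_pos s)
    rw [← Function.iterate_succ_apply, Nat.succ_eq_add_one, this, iter_heads]
  have ht : D.next^[D.heads s.1 - 1] (D.next t) = t := by
    have h2 : D.heads s.1 - 1 + 1 = D.heads t.1 := by rw [hf]; exact Nat.succ_pred_eq_of_pos (heads_pos t)
    rw [← Function.iterate_succ_apply, Nat.succ_eq_add_one, h2, iter_heads]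
  rw [← hs, h, ht]

lemma iter_inj {s : D.Strand} {a b : ℕ} (ha : a < D.heads s.1) (hb : b < D.heads s.1)
    (h : D.next^[a] s = D.next^[b] s) : a = b := by
  have h2 := congrArg (fun t : D.Strand => t.2.val) h
  rw [iter_val, iter_val] at h2
  have h3 : a ≡ b [MOD D.heads s.1] := Nat.ModEq.add_left_cancel' s.2.val h2
  rwa [Nat.ModEq, Nat.mod_eq_of_lt ha, Nat.mod_eq_of_lt hb] at h3

lemma exists_iter (s t : D.Strand) (h : t.1 = s.1) :
    ∃ a, a < D.heads s.1 ∧ t = D.next^[a] s := by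
  have hN : 0 < D.heads s.1 := heads_pos s
  have htlt : t.2.val < D.heads s.1 := by rw [← h]; exact t.2.isLt
  refine ⟨(t.2.val + D.heads s.1 - s.2.val) % D.heads s.1, Nat.mod_lt _ hN, ?_⟩
  refine strand_ext (by rw [iter_fst]; exact h) ?_
  rw [iter_val, Nat.add_mod_mod]
  have : s.2.val + (t.2.val + D.heads s.1 - s.2.val) = t.2.val + D.heads s.1 := by
    have := s.2.isLt; omega
  rw [this, Nat.add_mod_right, Nat.mod_eq_of_lt htlt]

end GaussDiagram


namespace GaussDiagram

variable {D : GaussDiagram} {k : ℕ}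

lemma dst_def (q : Fin D.chords) : D.dst q = D.next (D.src q) := rfl

lemma MerColoring.seq_idx (mc : D.MerColoring k) (s : D.Strand) : mc.seq (mc.idx s) = s :=
  Equiv.ofBijective_apply_symm_apply mc.seq mc.bij s

lemma MerColoring.idx_seq (mc : D.MerColoring k) (i : Fin D.nStrands) : mc.idx (mc.seq i) = i :=
  Equiv.ofBijective_symm_apply_apply mc.seq mc.bij i

lemma MerColoring.colorOf_def (mc : D.MerColoring k) (s : D.Strand) :
    mc.colorOf s = mc.col (mc.idx s) := rfl

/-- The set of strands of color `j` colored before time `i`. -/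
def MerColoring.BSet (mc : D.MerColoring k) (i : ℕ) (j : Fin k) : Set D.Strand :=
  {s | (mc.idx s : ℕ) < i ∧ mc.colorOf s = j}

lemma MerColoring.bset_arc (mc : D.MerColoring k) (i : ℕ) (j : Fin k) :
    mc.BSet i j = ∅ ∨
    ∃ (t0 : D.Strand) (len : ℕ), 0 < len ∧ len ≤ D.heads t0.1 ∧
      mc.BSet i j = {s | ∃ a, a < len ∧ s = D.next^[a] t0} := by
  induction i with
  | zero => left; ext s; simp [BSet]
  | succ i ih =>
    by_cases hin : i < D.nStrands
    · set si := mc.seq ⟨i, hin⟩ with hsi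
      have hidxsi : (mc.idx si : ℕ) = i := by rw [hsi, idx_seq]
      have hmem : ∀ s : D.Strand, s ∈ mc.BSet (i+1) j ↔
          s ∈ mc.BSet i j ∨ (s = si ∧ mc.col ⟨i, hin⟩ = j) := by
        intro s
        constructor
        · rintro ⟨hlt, hc⟩
          rcases Nat.lt_succ_iff_lt_or_eq.mp hlt with h | h
          · exact Or.inl ⟨h, hc⟩
          · right
            have hidx : mc.idx s = ⟨i, hin⟩ := Fin.ext h
            have hse : s = si := by rw [hsi, ← hidx, seq_idx]
            refine ⟨hse, ?_⟩
            rw [← hc, hse, colorOf_def, hsi, idx_seq]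
        · rintro (⟨hlt, hc⟩ | ⟨rfl, hc⟩)
          · exact ⟨Nat.lt_succ_of_lt hlt, hc⟩
          · exact ⟨by rw [hidxsi]; exact Nat.lt_succ_self i,
              by rw [colorOf_def, hsi, idx_seq]; exact hc⟩
      by_cases hcol : mc.col ⟨i, hin⟩ = j
      · rcases ih with hemp | ⟨t0, len, hpos, hlen, hB⟩
        · right
          refine ⟨si, 1, Nat.one_pos, heads_pos si, ?_⟩
          ext s
          rw [hmem]
          constructor
          · rintro (h | ⟨rfl, -⟩)
            · rw [hemp] at h; exact absurd h (Set.notMem_empty _)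
            · exact ⟨0, Nat.one_pos, rfl⟩
          · rintro ⟨a, ha, rfl⟩
            have ha0 : a = 0 := by omega
            subst ha0
            exact Or.inr ⟨rfl, hcol⟩
        · have hk : k ≤ i := by
            by_contra hklt
            push_neg at hklt
            have ht0 : t0 ∈ mc.BSet i j := by rw [hB]; exact ⟨0, hpos, rfl⟩
            obtain ⟨hlt0, hc0⟩ := ht0
            have hik : (mc.idx t0 : ℕ) < k := lt_trans hlt0 hklt
            have h1 : mc.colorOf t0 = ⟨(mc.idx t0 : ℕ), hik⟩ := mc.seed_col _ hik
            have h2 : mc.col ⟨i, hin⟩ = ⟨i, hklt⟩ := mc.seed_col _ hklt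
            have h3 : ((⟨(mc.idx t0 : ℕ), hik⟩ : Fin k) : ℕ) = ((⟨i, hklt⟩ : Fin k) : ℕ) := by
              rw [← h1, ← h2, hc0, hcol]
            simp only [Fin.val_mk] at h3
            omega
          obtain ⟨q, l, r, hl, hr, hq, htl, hcl⟩ := mc.move ⟨i, hin⟩ hk
          have hseql : mc.seq l ∈ mc.BSet i j := by
            refine ⟨by rw [idx_seq]; exact hl, ?_⟩
            rw [colorOf_def, idx_seq, ← hcl]
            exact hcol
          rw [hB] at hseql
          obtain ⟨a, ha, hseqa⟩ := hseql
          have hnotarc : ∀ b, b < len → si ≠ D.next^[b] t0 := by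
            intro b hb he
            have hmem2 : si ∈ mc.BSet i j := by rw [hB]; exact ⟨b, hb, he⟩
            have := hmem2.1
            omega
          rcases hq with ⟨hql, hqi⟩ | ⟨hqi, hql⟩
          · -- src q = seq l, dst q = si
            have hsi2 : si = D.next^[a+1] t0 := by
              rw [Function.iterate_succ_apply', ← hseqa, ← hql, hsi, ← hqi, dst_def]
            have halen : a + 1 = len := by
              rcases Nat.lt_or_ge (a+1) len with h|h
              · exact absurd hsi2 (hnotarc _ h)
              · omega
            have hlenlt : len < D.heads t0.1 := by
              rcases Nat.lt_or_ge len (D.heads t0.1) with h|h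
              · exact h
              · have hle : len = D.heads t0.1 := le_antisymm hlen h
                have hsit : si = D.next^[0] t0 := by
                  rw [hsi2, halen, hle, iter_heads, Function.iterate_zero_apply]
                exact absurd hsit (hnotarc 0 hpos)
            right
            refine ⟨t0, len + 1, by omega, by omega, ?_⟩
            ext s
            rw [hmem, hB]
            constructor
            · rintro (⟨a', ha', rfl⟩ | ⟨rfl, -⟩)
              · exact ⟨a', by omega, rfl⟩
              · exact ⟨len, Nat.lt_succ_self len, halen ▸ hsi2⟩
            · rintro ⟨a', ha', rfl⟩
              rcases Nat.lt_or_ge a' len with h|h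
              · exact Or.inl ⟨a', h, rfl⟩
              · have he : a' = len := by omega
                subst he
                exact Or.inr ⟨(halen ▸ hsi2).symm, hcol⟩
          · -- src q = si, dst q = seq l
            have hnsi : D.next si = D.next^[a] t0 := by
              rw [hsi, ← hqi, ← dst_def, hql, hseqa]
            have ha0 : a = 0 := by
              by_contra h0
              have e1 : a - 1 + 1 = a := by omega
              have h1 := Function.iterate_succ_apply' D.next (a-1) t0
              rw [Nat.succ_eq_add_one, e1] at h1
              have : si = D.next^[a-1] t0 := next_inj (hnsi.trans (h1.symm ▸ rfl : D.next^[a] t0 = D.next (D.next^[a-1] t0)))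
              exact absurd this (hnotarc _ (by omega))
            have ht0eq : D.next si = t0 := by rw [ha0] at hnsi; exact hnsi
            have hfst : t0.1 = si.1 := by rw [← ht0eq]; rfl
            have hN : 0 < D.heads si.1 := heads_pos si
            have hsiN : si = D.next^[D.heads si.1 - 1] t0 := by
              have e1 : D.heads si.1 - 1 + 1 = D.heads si.1 := by omega
              have h1 := Function.iterate_succ_apply D.next (D.heads si.1 - 1) si
              rw [Nat.succ_eq_add_one, e1] at h1
              rw [← ht0eq, ← h1, iter_heads]
            have hlenlt : len < D.heads si.1 := by
              rcases Nat.lt_or_ge len (D.heads si.1) with h|h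
              · exact h
              · exact absurd hsiN (hnotarc _ (by omega))
            right
            refine ⟨si, len + 1, by omega, by omega, ?_⟩
            ext s
            rw [hmem, hB]
            constructor
            · rintro (⟨a', ha', rfl⟩ | ⟨rfl, -⟩)
              · exact ⟨a' + 1, by omega, by rw [Function.iterate_succ_apply, ht0eq]⟩
              · exact ⟨0, by omega, rfl⟩
            · rintro ⟨a', ha', rfl⟩
              rcases Nat.eq_zero_or_pos a' with h|h
              · subst h
                exact Or.inr ⟨rfl, hcol⟩
              · refine Or.inl ⟨a' - 1, by omega, ?_⟩
                have e1 : a' - 1 + 1 = a' := by omega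
                have h1 := Function.iterate_succ_apply D.next (a' - 1) si
                rw [Nat.succ_eq_add_one, e1] at h1
                rw [← ht0eq, ← h1]
      · have heq : mc.BSet (i+1) j = mc.BSet i j := by
          ext s
          rw [hmem]
          constructor
          · rintro (h | ⟨rfl, hc⟩)
            · exact h
            · exact absurd hc hcol
          · exact Or.inl
        rw [heq]
        exact ih
    · have heq : mc.BSet (i+1) j = mc.BSet i j := by
        ext s
        constructor
        · rintro ⟨hlt, hc⟩
          exact ⟨by have := (mc.idx s).isLt; unfold nStrands at *; omega, hc⟩
        · rintro ⟨hlt, hc⟩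
          exact ⟨by omega, hc⟩
      rw [heq]
      exact ih

lemma MerColoring.star (mc : D.MerColoring k) (s : D.Strand) (j : Fin k)
    (hnext : D.next s ∈ mc.BSet (mc.idx s) j)
    (hprev : ∃ u, D.next u = s ∧ u ∈ mc.BSet (mc.idx s) j) :
    ∀ t : D.Strand, t.1 = s.1 → t ≠ s → t ∈ mc.BSet (mc.idx s) j := by
  obtain ⟨u, hu, huB⟩ := hprev
  rcases mc.bset_arc (mc.idx s) j with hemp | ⟨t0, len, hpos, hlen, hB⟩
  · rw [hemp] at hnext; exact absurd hnext (Set.notMem_empty _)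
  have hnotarc : ∀ b, b < len → s ≠ D.next^[b] t0 := by
    intro b hb he
    have hmem2 : s ∈ mc.BSet (mc.idx s) j := by rw [hB]; exact ⟨b, hb, he⟩
    exact absurd hmem2.1 (lt_irrefl _)
  rw [hB] at hnext huB
  obtain ⟨a, ha, hna⟩ := hnext
  have ha0 : a = 0 := by
    by_contra h0
    have e1 : a - 1 + 1 = a := by omega
    have h1 := Function.iterate_succ_apply' D.next (a-1) t0
    rw [Nat.succ_eq_add_one, e1] at h1
    have : s = D.next^[a-1] t0 := next_inj (hna.trans h1)
    exact absurd this (hnotarc _ (by omega))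
  have ht0 : D.next s = t0 := by rw [ha0] at hna; exact hna
  obtain ⟨b, hb, hub⟩ := huB
  have hsb : s = D.next^[b+1] t0 := by rw [Function.iterate_succ_apply', ← hub, hu]
  have hblen : b + 1 = len := by
    rcases Nat.lt_or_ge (b+1) len with h|h
    · exact absurd hsb (hnotarc _ h)
    · omega
  have hfst : t0.1 = s.1 := by rw [← ht0]; rfl
  have hN : 0 < D.heads s.1 := heads_pos s
  have hsN : s = D.next^[D.heads s.1 - 1] t0 := by
    have e1 : D.heads s.1 - 1 + 1 = D.heads s.1 := by omega
    have h1 := Function.iterate_succ_apply D.next (D.heads s.1 - 1) s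
    rw [Nat.succ_eq_add_one, e1] at h1
    rw [← ht0, ← h1, iter_heads]
  have hlenN : len < D.heads t0.1 := by
    rcases Nat.lt_or_ge len (D.heads t0.1) with h|h
    · exact h
    · rw [hfst] at h
      exact absurd hsN (hnotarc _ (by omega))
  have hslen : s = D.next^[len] t0 := hblen ▸ hsb
  have hlen_eq : len = D.heads s.1 - 1 := by
    refine iter_inj (s := t0) hlenN (by rw [hfst]; omega) ?_
    exact hslen.symm.trans hsN
  intro t htf hts
  obtain ⟨c, hc, hct⟩ := exists_iter t0 t (by rw [htf, ← hfst])
  have hclen : c < len := by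
    rcases Nat.lt_or_ge c len with h|h
    · exact h
    · exfalso
      have hceq : c = D.heads s.1 - 1 := by rw [hfst] at hc; omega
      rw [hceq, ← hsN] at hct
      exact hts hct
  rw [hB]
  exact ⟨c, hclen, hct⟩

end GaussDiagram


namespace GaussDiagram

variable {D : GaussDiagram} {k : ℕ}

lemma src_inj : Function.Injective D.src := D.headBij.injective

lemma dst_inj : Function.Injective D.dst := fun a b h => src_inj (next_inj h)

lemma MerColoring.height_lt_iff (mc : D.MerColoring k) (s t : D.Strand) :
    mc.height s < mc.height t ↔ (mc.idx t : ℕ) < (mc.idx s : ℕ) := by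
  unfold MerColoring.height
  rw [one_div_lt_one_div (by positivity) (by positivity)]
  constructor
  · intro h
    have h2 : ((mc.idx t : ℕ) : ℚ) < ((mc.idx s : ℕ) : ℚ) := by linarith
    exact_mod_cast h2
  · intro h
    have h2 : ((mc.idx t : ℕ) : ℚ) < ((mc.idx s : ℕ) : ℚ) := by exact_mod_cast h
    linarith

lemma MerColoring.height_le_iff (mc : D.MerColoring k) (s t : D.Strand) :
    mc.height s ≤ mc.height t ↔ (mc.idx t : ℕ) ≤ (mc.idx s : ℕ) := by
  unfold MerColoring.height
  rw [one_div_le_one_div (by positivity) (by positivity)]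
  constructor
  · intro h
    have h2 : ((mc.idx t : ℕ) : ℚ) ≤ ((mc.idx s : ℕ) : ℚ) := by linarith
    exact_mod_cast h2
  · intro h
    have h2 : ((mc.idx t : ℕ) : ℚ) ≤ ((mc.idx s : ℕ) : ℚ) := by exact_mod_cast h
    linarith

lemma MerColoring.key (mc : D.MerColoring k) (q' : Fin D.chords) (w o : D.Strand)
    (hso : (D.src q' = w ∧ D.dst q' = o) ∨ (D.src q' = o ∧ D.dst q' = w))
    (hlt : (mc.idx o : ℕ) < (mc.idx w : ℕ))
    (hco : mc.colorOf o = mc.colorOf w) :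
    ((mc.idx (D.tail q') : ℕ) < (mc.idx w : ℕ)) ∨
    ∃ q'' : Fin D.chords,
      (mc.idx (D.tail q'') : ℕ) < (mc.idx w : ℕ) ∧
      ((D.src q' = w ∧ D.dst q'' = w) ∨ (D.dst q' = w ∧ D.src q'' = w)) ∧
      (∀ t : D.Strand, t.1 = w.1 → t ≠ w →
        (mc.idx t : ℕ) < (mc.idx w : ℕ) ∧ mc.colorOf t = mc.colorOf w) := by
  have hk : k ≤ (mc.idx w : ℕ) := by
    by_contra hklt
    push_neg at hklt
    have hok : (mc.idx o : ℕ) < k := lt_trans hlt hklt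
    have h1 : mc.colorOf o = ⟨_, hok⟩ := mc.seed_col _ hok
    have h2 : mc.colorOf w = ⟨_, hklt⟩ := mc.seed_col _ hklt
    have h3 := congrArg Fin.val (h1.symm.trans (hco.trans h2))
    simp only [Fin.val_mk] at h3
    omega
  obtain ⟨q2, l, r, hl, hr, hq, htl, hcl⟩ := mc.move (mc.idx w) hk
  rw [mc.seq_idx] at hq
  by_cases hqq : q2 = q'
  · left
    subst hqq
    rw [htl, mc.idx_seq]
    exact hr
  · right
    have hcoll : mc.colorOf (mc.seq l) = mc.colorOf w := by
      rw [colorOf_def, mc.idx_seq, ← hcl, ← colorOf_def]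
    rcases hso with ⟨h1, h2⟩ | ⟨h1, h2⟩
    · rcases hq with ⟨ha, hb⟩ | ⟨ha, hb⟩
      · refine ⟨q2, by rw [htl, mc.idx_seq]; exact hr, Or.inl ⟨h1, hb⟩, ?_⟩
        have hnext : D.next w ∈ mc.BSet (mc.idx w) (mc.colorOf w) := by
          have he : D.next w = o := by rw [← h1, ← dst_def, h2]
          rw [he]
          exact ⟨hlt, hco⟩
        have hprev : ∃ u, D.next u = w ∧ u ∈ mc.BSet (mc.idx w) (mc.colorOf w) := by
          refine ⟨mc.seq l, ?_, ⟨by rw [mc.idx_seq]; exact hl, hcoll⟩⟩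
          rw [← ha, ← dst_def, hb]
        exact mc.star w (mc.colorOf w) hnext hprev
      · exact absurd (src_inj (ha.trans h1.symm)) hqq
    · rcases hq with ⟨ha, hb⟩ | ⟨ha, hb⟩
      · exact absurd (dst_inj (hb.trans h2.symm)) hqq
      · refine ⟨q2, by rw [htl, mc.idx_seq]; exact hr, Or.inr ⟨h2, ha⟩, ?_⟩
        have hnext : D.next w ∈ mc.BSet (mc.idx w) (mc.colorOf w) := by
          have he : D.next w = mc.seq l := by rw [← ha, ← dst_def, hb]
          rw [he]
          exact ⟨by rw [mc.idx_seq]; exact hl, hcoll⟩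
        have hprev : ∃ u, D.next u = w ∧ u ∈ mc.BSet (mc.idx w) (mc.colorOf w) :=
          ⟨o, by rw [← h1, ← dst_def, h2], ⟨hlt, hco⟩⟩
        exact mc.star w (mc.colorOf w) hnext hprev

end GaussDiagram

open GaussDiagram in
/-- Lemma 3.2: Let `D` be a Gauss diagram that is not cut-split, with a
`k`-meridional coloring, and let `p` be a chord whose arrowhead separates two
strands receiving the same final color `j`.  Then either the arrowtail strand of
`p` is higher than the minimum of their heights, or the strands of color `j`
form exactly one circle component `U` of `D` and `p` is the unique chord with
arrowhead on `U` whose arrowtail strand is at most that minimum. -/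
theorem low_tail_of_not_cutSplit (D : GaussDiagram) (hns : ¬ D.CutSplit)
    (k : ℕ) (mc : D.MerColoring k) (p : Fin D.chords)
    (hsame : mc.colorOf (D.src p) = mc.colorOf (D.dst p)) :
    min (mc.height (D.src p)) (mc.height (D.dst p)) < mc.height (D.tail p) ∨
    (∃ U : Fin D.circles,
      {s : D.Strand | mc.colorOf s = mc.colorOf (D.src p)} = {s : D.Strand | s.1 = U} ∧
      ∀ q : Fin D.chords, (D.headPos q).1 = U →
        mc.height (D.tail q) ≤ min (mc.height (D.src q)) (mc.height (D.dst q)) → q = p) := by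
    classical
  have hne : D.src p ≠ D.dst p := fun h => hns (Or.inr ⟨p, h⟩)
  have hidxne : (mc.idx (D.src p) : ℕ) ≠ (mc.idx (D.dst p) : ℕ) := by
    intro h
    apply hne
    have h2 : mc.idx (D.src p) = mc.idx (D.dst p) := Fin.ext h
    have h3 := congrArg mc.seq h2
    rwa [mc.seq_idx, mc.seq_idx] at h3
  obtain ⟨w, o, hso, hlt, hco⟩ :
      ∃ w o, ((D.src p = w ∧ D.dst p = o) ∨ (D.src p = o ∧ D.dst p = w)) ∧
        (mc.idx o : ℕ) < (mc.idx w : ℕ) ∧ mc.colorOf o = mc.colorOf w := by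
    rcases Nat.lt_or_ge (mc.idx (D.src p) : ℕ) (mc.idx (D.dst p) : ℕ) with h | h
    · exact ⟨D.dst p, D.src p, Or.inr ⟨rfl, rfl⟩, h, hsame⟩
    · exact ⟨D.src p, D.dst p, Or.inl ⟨rfl, rfl⟩, by omega, hsame.symm⟩
  rcases mc.key p w o hso hlt hco with hlow | ⟨q, hqtail, hpat, hstar⟩
  · left
    rw [min_lt_iff]
    rcases hso with ⟨h1, h2⟩ | ⟨h1, h2⟩
    · left; rw [h1, mc.height_lt_iff]; exact hlow
    · right; rw [h2, mc.height_lt_iff]; exact hlow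
  · right
    have hjw : mc.colorOf (D.src p) = mc.colorOf w := by
      rcases hso with ⟨h1, h2⟩ | ⟨h1, h2⟩
      · rw [h1]
      · rw [h1]; exact hco
    refine ⟨w.1, ?_, ?_⟩
    · ext t
      simp only [Set.mem_setOf_eq]
      constructor
      · intro ht
        have hwB : w ∈ mc.BSet D.nStrands (mc.colorOf w) := ⟨(mc.idx w).isLt, rfl⟩
        have htB : t ∈ mc.BSet D.nStrands (mc.colorOf w) :=
          ⟨(mc.idx t).isLt, by rw [← hjw]; exact ht⟩
        rcases mc.bset_arc D.nStrands (mc.colorOf w) with hemp | ⟨t0, len, hpos, hlen, hB⟩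
        · rw [hemp] at hwB
          exact absurd hwB (Set.notMem_empty _)
        · rw [hB] at hwB htB
          obtain ⟨a, -, ha⟩ := hwB
          obtain ⟨b, -, hb⟩ := htB
          rw [ha, hb, iter_fst, iter_fst]
      · intro ht
        by_cases htw : t = w
        · rw [htw, hjw]
        · rw [hjw]
          exact (hstar t ht htw).2
    · intro q' hU hlow
      have hlow' : (mc.idx (D.src q') : ℕ) ≤ (mc.idx (D.tail q') : ℕ) ∧
          (mc.idx (D.dst q') : ℕ) ≤ (mc.idx (D.tail q') : ℕ) := by
        rw [le_min_iff] at hlow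
        exact ⟨(mc.height_le_iff _ _).mp hlow.1, (mc.height_le_iff _ _).mp hlow.2⟩
      have hsrcfst : (D.src q').1 = w.1 := hU
      have hdstfst : (D.dst q').1 = w.1 := by rw [dst_def, next_fst]; exact hU
      have hcsrc : mc.colorOf (D.src q') = mc.colorOf w := by
        by_cases h : D.src q' = w
        · rw [h]
        · exact (hstar _ hsrcfst h).2
      have hcdst : mc.colorOf (D.dst q') = mc.colorOf w := by
        by_cases h : D.dst q' = w
        · rw [h]
        · exact (hstar _ hdstfst h).2
      have hne2 : D.src q' ≠ D.dst q' := fun h => hns (Or.inr ⟨q', h⟩)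
      have hidxne2 : (mc.idx (D.src q') : ℕ) ≠ (mc.idx (D.dst q') : ℕ) := by
        intro h
        apply hne2
        have h2 : mc.idx (D.src q') = mc.idx (D.dst q') := Fin.ext h
        have h3 := congrArg mc.seq h2
        rwa [mc.seq_idx, mc.seq_idx] at h3
      obtain ⟨w', o', hso', hlt', hco'⟩ :
          ∃ w' o', ((D.src q' = w' ∧ D.dst q' = o') ∨ (D.src q' = o' ∧ D.dst q' = w')) ∧
            (mc.idx o' : ℕ) < (mc.idx w' : ℕ) ∧ mc.colorOf o' = mc.colorOf w' := by
        rcases Nat.lt_or_ge (mc.idx (D.src q') : ℕ) (mc.idx (D.dst q') : ℕ) with h | h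
        · exact ⟨D.dst q', D.src q', Or.inr ⟨rfl, rfl⟩, h, hcsrc.trans hcdst.symm⟩
        · exact ⟨D.src q', D.dst q', Or.inl ⟨rfl, rfl⟩, by omega, hcdst.trans hcsrc.symm⟩
      have hw'fst : w'.1 = w.1 := by
        rcases hso' with ⟨h1, -⟩ | ⟨-, h2⟩
        · rw [← h1]; exact hsrcfst
        · rw [← h2]; exact hdstfst
      rcases mc.key q' w' o' hso' hlt' hco' with hlow2 | ⟨q2, hq2tail, hpat2, hstar2⟩
      · exfalso
        rcases hso' with ⟨h1, -⟩ | ⟨-, h2⟩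
        · have := hlow'.1
          rw [h1] at this
          omega
        · have := hlow'.2
          rw [h2] at this
          omega
      · have hww : w' = w := by
          by_contra hne3
          have hA := (hstar w' hw'fst hne3).1
          have hB2 := (hstar2 w hw'fst.symm (fun h => hne3 h.symm)).1
          omega
        subst hww
        rcases hpat2 with ⟨h1, h2⟩ | ⟨h1, h2⟩
        · rcases hpat with ⟨g1, g2⟩ | ⟨g1, g2⟩
          · exact src_inj (h1.trans g1.symm)
          · exfalso
            have hq'q : q' = q := src_inj (h1.trans g2.symm)
            have e1 := hlow'.1
            rw [hq'q, g2] at e1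
            omega
        · rcases hpat with ⟨g1, g2⟩ | ⟨g1, g2⟩
          · exfalso
            have hq'q : q' = q := dst_inj (h1.trans g2.symm)
            have e1 := hlow'.2
            rw [hq'q, g2] at e1
            omega
          · exact dst_inj (h1.trans g1.symm)
end

section
/- For any Gauss diagram D of a virtual link (with every circle component containing at least one arrowtail), the Wirtinger number of D is at most the bridge number of D: ω(D) ≤ vb(D). Consequently, for any virtual link L, ω(L) ≤ vb(L). Explicitly, taking the overbridges of D as seed strands, every strand of D can be colored by a sequence of coloring moves. -/
namespace WirtAux

open GaussDiagram

variable (D : GaussDiagram)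

/-- An enumeration of the strands. -/
noncomputable def fe : Fin D.nStrands ≃ D.Strand :=
  (finCongr (by rw [nStrands, Nat.card_eq_fintype_card])).trans (Fintype.equivFin D.Strand).symm

/-- Distance from the set of overbridges, going forward. -/
noncomputable def dd (s : D.Strand) : ℕ :=
  sInf {m | ∃ t, D.IsOverbridge t ∧ D.next^[m] t = s}

/-- Candidate indices of origin overbridges of `s`. -/
def SS (s : D.Strand) : Set ℕ :=
  {i | ∃ h : i < D.nStrands, D.IsOverbridge (fe D ⟨i, h⟩) ∧ D.next^[dd D s] (fe D ⟨i, h⟩) = s}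

lemma npos (s : D.Strand) : 0 < D.nStrands := by
  have : Nonempty D.Strand := ⟨s⟩
  rw [nStrands]
  exact Nat.card_pos

/-- The canonical origin overbridge of `s`. -/
noncomputable def OO (s : D.Strand) : D.Strand :=
  fe D ⟨sInf (SS D s) % D.nStrands, Nat.mod_lt _ (npos D s)⟩

lemma iterate_next (m : ℕ) (c : Fin D.circles) (j : ℕ) (hj : j < D.heads c) :
    D.next^[m] ⟨c, ⟨j, hj⟩⟩ =
      ⟨c, ⟨(j + m) % D.heads c, Nat.mod_lt _ (Nat.lt_of_le_of_lt (Nat.zero_le _) hj)⟩⟩ := by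
  induction m with
  | zero => simp [Nat.mod_eq_of_lt hj]
  | succ m ih =>
    rw [Function.iterate_succ_apply', ih]
    refine congrArg (Sigma.mk c) (Fin.ext ?_)
    show ((j + m) % D.heads c + 1) % D.heads c = (j + (m + 1)) % D.heads c
    rw [Nat.mod_add_mod, Nat.add_assoc]

lemma next_inj : Function.Injective D.next := by
  intro s t h
  have hc0 := congrArg Sigma.fst h
  have hc : s.1 = t.1 := hc0
  obtain ⟨c, j⟩ := s
  obtain ⟨c', j'⟩ := t
  simp only at hc
  subst hc
  have h20 := congrArg (fun x : D.Strand => x.2.val) h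
  have h2 : (j.val + 1) % D.heads c = (j'.val + 1) % D.heads c := h20
  have hj := j.isLt
  have hj' := j'.isLt
  have e1 : (j.val + 1) % D.heads c = if j.val + 1 = D.heads c then 0 else j.val + 1 := by
    split
    · simp_all [Nat.mod_self]
    · exact Nat.mod_eq_of_lt (by omega)
  have e2 : (j'.val + 1) % D.heads c = if j'.val + 1 = D.heads c then 0 else j'.val + 1 := by
    split
    · simp_all [Nat.mod_self]
    · exact Nat.mod_eq_of_lt (by omega)
  rw [e1, e2] at h2
  refine congrArg (Sigma.mk c) (Fin.ext ?_)
  split_ifs at h2 <;> omega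

variable {D}
variable (hT : ∀ c : Fin D.circles, ∃ p : Fin D.chords, (D.tail p).1 = c)
include hT

lemma reach (s : D.Strand) : ∃ m t, D.IsOverbridge t ∧ D.next^[m] t = s := by
  obtain ⟨c, j, hj⟩ := s
  obtain ⟨p, hp⟩ := hT c
  rcases hq : D.tail p with ⟨c', j₀⟩
  rw [hq] at hp
  simp only at hp
  subst hp
  have hob : D.IsOverbridge ⟨c', j₀⟩ := ⟨p, hq⟩
  refine ⟨D.heads c' + j - j₀.val, ⟨c', j₀⟩, hob, ?_⟩
  rw [show (⟨c', j₀⟩ : D.Strand) = ⟨c', ⟨j₀.val, j₀.isLt⟩⟩ by rfl, iterate_next]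
  have h0 : j₀.val < D.heads c' := j₀.isLt
  congr 1
  ext
  simp only
  have : j₀.val + (D.heads c' + j - j₀.val) = D.heads c' + j := by omega
  rw [this, Nat.add_mod_left, Nat.mod_eq_of_lt hj]

lemma dd_mem (s : D.Strand) :
    ∃ t, D.IsOverbridge t ∧ D.next^[dd D s] t = s := by
  have hne : {m | ∃ t, D.IsOverbridge t ∧ D.next^[m] t = s}.Nonempty := by
    obtain ⟨m, t, h⟩ := reach hT s
    exact ⟨m, t, h⟩
  exact Nat.sInf_mem hne

omit hT in
lemma dd_le {s : D.Strand} {m : ℕ} {t : D.Strand}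
    (h1 : D.IsOverbridge t) (h2 : D.next^[m] t = s) : dd D s ≤ m :=
  Nat.sInf_le ⟨t, h1, h2⟩

lemma dd_eq_zero_iff (s : D.Strand) : dd D s = 0 ↔ D.IsOverbridge s := by
  constructor
  · intro h0
    obtain ⟨t, ht, hts⟩ := dd_mem hT s
    rw [h0, Function.iterate_zero_apply] at hts
    rwa [← hts]
  · intro hob
    exact Nat.le_zero.mp (dd_le hob (Function.iterate_zero_apply _ _))

lemma OO_spec (s : D.Strand) :
    D.IsOverbridge (OO D s) ∧ D.next^[dd D s] (OO D s) = s := by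
  have hne : (SS D s).Nonempty := by
    obtain ⟨t, ht, hts⟩ := dd_mem hT s
    refine ⟨((fe D).symm t).val, ((fe D).symm t).isLt, ?_, ?_⟩ <;>
      simp only [Fin.eta, Equiv.apply_symm_apply] <;> assumption
  obtain ⟨hlt, h1, h2⟩ := Nat.sInf_mem hne
  have he : (⟨sInf (SS D s) % D.nStrands, Nat.mod_lt _ (npos D s)⟩ : Fin D.nStrands)
      = ⟨sInf (SS D s), hlt⟩ := Fin.ext (Nat.mod_eq_of_lt hlt)
  rw [OO, he]
  exact ⟨h1, h2⟩

lemma OO_self (s : D.Strand) (h0 : dd D s = 0) : OO D s = s := by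
  have hob : D.IsOverbridge s := (dd_eq_zero_iff hT s).mp h0
  have hSS : SS D s = {((fe D).symm s).val} := by
    ext i
    simp only [SS, h0, Function.iterate_zero_apply, Set.mem_setOf_eq, Set.mem_singleton_iff]
    constructor
    · rintro ⟨h, -, h2⟩
      have : (⟨i, h⟩ : Fin D.nStrands) = (fe D).symm s := by
        rw [← h2, Equiv.symm_apply_apply]
      rw [← this]
    · rintro rfl
      refine ⟨((fe D).symm s).isLt, ?_, ?_⟩ <;>
        simp only [Fin.eta, Equiv.apply_symm_apply] <;> assumption
  rw [OO]
  have : sInf (SS D s) = ((fe D).symm s).val := by rw [hSS, csInf_singleton]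
  have he : (⟨sInf (SS D s) % D.nStrands, Nat.mod_lt _ (npos D s)⟩ : Fin D.nStrands)
      = (fe D).symm s := Fin.ext (by
        show sInf (SS D s) % D.nStrands = _
        rw [this, Nat.mod_eq_of_lt ((fe D).symm s).isLt])
  rw [he, Equiv.apply_symm_apply]

lemma OO_step (s : D.Strand) (h : dd D s ≠ 0) :
    dd D (D.next^[dd D s - 1] (OO D s)) = dd D s - 1 ∧
    D.next (D.next^[dd D s - 1] (OO D s)) = s ∧
    OO D (D.next^[dd D s - 1] (OO D s)) = OO D s := by
  obtain ⟨hob, hreach⟩ := OO_spec hT s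
  set m := dd D s with hm
  set u := D.next^[m - 1] (OO D s) with hu
  have hmsucc : m = (m - 1) + 1 := by omega
  have hnext : D.next u = s := by
    show D.next (D.next^[m - 1] (OO D s)) = s
    have h5 : D.next^[(m - 1) + 1] (OO D s) = D.next (D.next^[m - 1] (OO D s)) :=
      Function.iterate_succ_apply' _ _ _
    rw [← h5, ← hmsucc]
    exact hreach
  have hle : dd D u ≤ m - 1 := dd_le hob rfl
  have hge : m - 1 ≤ dd D u := by
    by_contra hlt
    push_neg at hlt
    obtain ⟨t', ht', ht'u⟩ := dd_mem hT u
    have : D.next^[dd D u + 1] t' = s := by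
      rw [Function.iterate_succ_apply', ht'u, hnext]
    have := dd_le ht' this
    omega
  have hdu : dd D u = m - 1 := le_antisymm hle hge
  refine ⟨hdu, hnext, ?_⟩
  have hSS : SS D u = SS D s := by
    ext i
    simp only [SS, hdu, ← hm, Set.mem_setOf_eq]
    constructor
    · rintro ⟨hi, h1, h2⟩
      refine ⟨hi, h1, ?_⟩
      rw [hmsucc, Function.iterate_succ_apply', h2, hnext]
    · rintro ⟨hi, h1, h2⟩
      refine ⟨hi, h1, ?_⟩
      apply next_inj D
      rw [hnext]
      rw [hmsucc, Function.iterate_succ_apply'] at h2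
      exact h2
  rw [OO, OO]
  exact congrArg (fe D) (Fin.ext (by
    show sInf (SS D u) % D.nStrands = sInf (SS D s) % D.nStrands
    rw [hSS]))

omit hT

/-- The strands sorted by `dd`. -/
noncomputable def perm : Equiv.Perm (Fin D.nStrands) :=
  Tuple.sort (fun i => dd D (fe D i))

noncomputable def seqE : Fin D.nStrands ≃ D.Strand := (perm (D := D)).trans (fe D)

lemma mono_dd : Monotone (fun i : Fin D.nStrands => dd D (seqE i)) := by
  have h := Tuple.monotone_sort (fun i : Fin D.nStrands => dd D (fe D i))
  intro a b hab
  exact h hab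

include hT

lemma lt_vb_iff (i : Fin D.nStrands) : i.val < D.vb ↔ dd D (seqE i) = 0 := by
  classical
  set F := Finset.univ.filter (fun i : Fin D.nStrands => dd D (seqE i) = 0) with hF
  have hcard : F.card = D.vb := by
    have h1 : F.card = (Finset.univ.filter fun s : D.Strand => dd D s = 0).card := by
      refine Finset.card_bij (fun i _ => seqE i) ?_ ?_ ?_
      · intro a ha
        rw [hF, Finset.mem_filter] at ha
        exact Finset.mem_filter.mpr ⟨Finset.mem_univ _, ha.2⟩
      · intro a _ b _ hab
        exact (seqE (D := D)).injective hab
      · intro s hs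
        rw [Finset.mem_filter] at hs
        refine ⟨(seqE (D := D)).symm s, ?_, Equiv.apply_symm_apply _ _⟩
        rw [hF, Finset.mem_filter]
        refine ⟨Finset.mem_univ _, ?_⟩
        rw [Equiv.apply_symm_apply]
        exact hs.2
    have h2 : (Finset.univ.filter fun s : D.Strand => dd D s = 0)
        = Finset.univ.filter fun s : D.Strand => D.IsOverbridge s :=
      Finset.filter_congr (fun s _ => dd_eq_zero_iff hT s)
    rw [h1, h2, ← Fintype.card_subtype, ← Nat.card_eq_fintype_card]
    rfl
  have hdc : ∀ {a b : Fin D.nStrands}, a ≤ b → dd D (seqE b) = 0 → dd D (seqE a) = 0 :=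
    fun {a b} hab hb => Nat.le_zero.mp (hb ▸ mono_dd (D := D) hab)
  constructor
  · intro hi
    by_contra hne
    have hsub : F ⊆ Finset.Iio i := by
      intro j hj
      rw [hF, Finset.mem_filter] at hj
      rw [Finset.mem_Iio]
      by_contra hji
      push_neg at hji
      exact hne (hdc hji hj.2)
    have := Finset.card_le_card hsub
    rw [hcard, Fin.card_Iio] at this
    omega
  · intro h0
    have hsub : Finset.Iic i ⊆ F := fun j hj =>
      Finset.mem_filter.mpr ⟨Finset.mem_univ _, hdc (Finset.mem_Iic.mp hj) h0⟩
    have := Finset.card_le_card hsub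
    rw [hcard, Fin.card_Iic] at this
    omega

end WirtAux
open GaussDiagram in
/-- For every Gauss diagram `D` in which each circle component contains at
least one arrowtail, taking the overbridges as seed strands yields a valid
meridional coloring of all of `D`; hence `ω(D) ≤ vb(D)`.  Consequently, for any
virtual link `L` (a nonempty collection of such Gauss diagrams representing it),
`ω(L) ≤ vb(L)`. -/
theorem wirt_le_vb :
    (∀ D : GaussDiagram,
      (∀ c : Fin D.circles, ∃ p : Fin D.chords, (D.tail p).1 = c) →
      (∃ mc : D.MerColoring D.vb,
        ∀ i : Fin D.nStrands, i.val < D.vb → D.IsOverbridge (mc.seq i)) ∧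
      D.wirt ≤ D.vb) ∧
    (∀ L : Set GaussDiagram, L.Nonempty →
      (∀ D ∈ L, ∀ c : Fin D.circles, ∃ p : Fin D.chords, (D.tail p).1 = c) →
      sInf {k | ∃ D ∈ L, D.wirt = k} ≤ sInf {k | ∃ D ∈ L, D.vb = k}) := by
  have main : ∀ D : GaussDiagram, (∀ c : Fin D.circles, ∃ p : Fin D.chords, (D.tail p).1 = c) →
      ∃ mc : D.MerColoring D.vb,
        ∀ i : Fin D.nStrands, i.val < D.vb → D.IsOverbridge (mc.seq i) := by
    intro D hT
    have hlt : ∀ i : Fin D.nStrands,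
        ((WirtAux.seqE (D := D)).symm (WirtAux.OO D (WirtAux.seqE (D := D) i))).val < D.vb := by
      intro i
      rw [WirtAux.lt_vb_iff hT, Equiv.apply_symm_apply]
      exact (WirtAux.dd_eq_zero_iff hT _).mpr (WirtAux.OO_spec hT _).1
    refine ⟨⟨fun i => WirtAux.seqE (D := D) i, (WirtAux.seqE (D := D)).bijective,
        fun i => ⟨((WirtAux.seqE (D := D)).symm (WirtAux.OO D (WirtAux.seqE (D := D) i))).val,
          hlt i⟩, ?_, ?_⟩, ?_⟩
    · -- seed_col
      intro i h
      have h0 : WirtAux.dd D (WirtAux.seqE (D := D) i) = 0 := (WirtAux.lt_vb_iff hT i).mp h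
      have hOs := WirtAux.OO_self hT _ h0
      apply Fin.ext
      simp only [hOs, Equiv.symm_apply_apply]
    · -- move
      intro i hk
      set s := WirtAux.seqE (D := D) i with hs
      have hne0 : WirtAux.dd D s ≠ 0 := by
        intro h0
        have := (WirtAux.lt_vb_iff hT i).mpr h0
        omega
      obtain ⟨hdu, hnext, hOO⟩ := WirtAux.OO_step hT s hne0
      set u := D.next^[WirtAux.dd D s - 1] (WirtAux.OO D s) with hu
      obtain ⟨p, hp⟩ := D.headBij.2 u
      refine ⟨p, (WirtAux.seqE (D := D)).symm u, (WirtAux.seqE (D := D)).symm (D.tail p),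
        ?_, ?_, ?_, ?_, ?_⟩
      · -- l < i
        rw [Fin.lt_def]
        by_contra hc
        push_neg at hc
        have hile : i ≤ (WirtAux.seqE (D := D)).symm u := hc
        have hmono := WirtAux.mono_dd (D := D) hile
        simp only [Equiv.apply_symm_apply] at hmono
        rw [← hs, hdu] at hmono
        omega
      · -- r < i
        rw [Fin.lt_def]
        have hrv : ((WirtAux.seqE (D := D)).symm (D.tail p)).val < D.vb := by
          rw [WirtAux.lt_vb_iff hT, Equiv.apply_symm_apply]
          exact (WirtAux.dd_eq_zero_iff hT _).mpr ⟨p, rfl⟩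
        omega
      · left
        constructor
        · simp only [Equiv.apply_symm_apply]
          exact hp
        · have hd : D.dst p = D.next u := by
            rw [GaussDiagram.dst, GaussDiagram.src, hp]
          rw [hd, hnext]
      · simp only [Equiv.apply_symm_apply]
      · -- col i = col l
        apply Fin.ext
        show ((WirtAux.seqE (D := D)).symm (WirtAux.OO D (WirtAux.seqE (D := D) i))).val
          = ((WirtAux.seqE (D := D)).symm
              (WirtAux.OO D (WirtAux.seqE (D := D) ((WirtAux.seqE (D := D)).symm u)))).val
        rw [Equiv.apply_symm_apply, ← hs, hOO]
    · -- overbridges as seeds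
      intro i h
      exact (WirtAux.dd_eq_zero_iff hT _).mp ((WirtAux.lt_vb_iff hT i).mp h)
  constructor
  · intro D hT
    refine ⟨main D hT, Nat.sInf_le ?_⟩
    exact ⟨(main D hT).choose⟩
  · intro L hL hTL
    have hBne : {k | ∃ D ∈ L, D.vb = k}.Nonempty := by
      obtain ⟨D₀, hD₀⟩ := hL
      exact ⟨D₀.vb, D₀, hD₀, rfl⟩
    obtain ⟨D, hDL, hvb⟩ := Nat.sInf_mem hBne
    calc sInf {k | ∃ D ∈ L, D.wirt = k} ≤ D.wirt := Nat.sInf_le ⟨D, hDL, rfl⟩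
      _ ≤ D.vb := Nat.sInf_le ⟨(main D (hTL D hDL)).choose⟩
      _ = sInf {k | ∃ D ∈ L, D.vb = k} := hvb
end

section
/- Let D be a cut-split Gauss diagram in which some circle component U contains exactly one overbridge (equivalently, two strands of U adjacent at an arrowhead coincide, so U is colored entirely by one color that cannot arise from a coloring move into U from outside). Then ω(D) = ω(D \ U) + 1 and vb(D) = vb(D \ U) + 1, where D \ U is the Gauss diagram obtained by deleting U and all chords with an endpoint on U. -/
open GaussDiagram in
/-- `D'` is the Gauss diagram obtained from `D` by deleting the circle
component `U` together with all chords having an endpoint on `U`. -/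
def IsDeletion (D : GaussDiagram) (U : Fin D.circles) (D' : GaussDiagram) : Prop :=
  ∃ (eC : Fin D'.circles ≃ {c : Fin D.circles // c ≠ U})
    (eP : Fin D'.chords ≃ {p : Fin D.chords // (D.headPos p).1 ≠ U}),
    (∀ c : Fin D'.circles, D'.heads c = D.heads (eC c).1) ∧
    (∀ p : Fin D'.chords,
      ((eC (D'.headPos p).1).1 = (D.headPos (eP p).1).1 ∧
        ((D'.headPos p).2 : ℕ) = ((D.headPos (eP p).1).2 : ℕ))) ∧
    (∀ p : Fin D'.chords,
      ((eC (D'.tail p).1).1 = (D.tail (eP p).1).1 ∧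
        ((D'.tail p).2 : ℕ) = ((D.tail (eP p).1).2 : ℕ))) ∧
    (∀ p : Fin D'.chords, D'.sign p = D.sign (eP p).1)

namespace GDAux
open GaussDiagram
open GaussDiagram

noncomputable def colAux (k : ℕ) (par : ℕ → ℕ) (hpar : ∀ i, k ≤ i → par i < i) (i : ℕ) : ℕ :=
  if _h : i < k then i else colAux k par hpar (par i)
  termination_by i
  decreasing_by exact hpar i (Nat.le_of_not_lt _h)

lemma colAux_of_lt (k : ℕ) (par : ℕ → ℕ) (hpar : ∀ i, k ≤ i → par i < i) (i : ℕ)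
    (h : i < k) : colAux k par hpar i = i := by
  rw [colAux]; simp [h]

lemma colAux_of_le (k : ℕ) (par : ℕ → ℕ) (hpar : ∀ i, k ≤ i → par i < i) (i : ℕ)
    (h : k ≤ i) : colAux k par hpar i = colAux k par hpar (par i) := by
  rw [colAux]; simp [Nat.not_lt.2 h]

lemma colAux_lt (k : ℕ) (par : ℕ → ℕ) (hpar : ∀ i, k ≤ i → par i < i)
    (i : ℕ) : colAux k par hpar i < k := by
  induction i using Nat.strong_induction_on with
  | _ i ih =>
    by_cases h : i < k
    · rw [colAux_of_lt k par hpar i h]; exact h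
    · rw [colAux_of_le k par hpar i (Nat.le_of_not_lt h)]
      exact ih _ (hpar i (Nat.le_of_not_lt h))

/-- A coloring sequence without the colors: enough data to build a `MerColoring k`
for any `k ≥ t`. -/
structure PreCol (D : GaussDiagram) (t : ℕ) where
  seq : Fin D.nStrands → D.Strand
  bij : Function.Bijective seq
  move : ∀ i : Fin D.nStrands, t ≤ i.val →
    ∃ (p : Fin D.chords) (l r : Fin D.nStrands), l < i ∧ r < i ∧
      ((D.src p = seq l ∧ D.dst p = seq i) ∨ (D.src p = seq i ∧ D.dst p = seq l)) ∧
      D.tail p = seq r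

lemma pad {D : GaussDiagram} {t k : ℕ} (pc : PreCol D t) (hk : t ≤ k) :
    Nonempty (D.MerColoring k) := by
  classical
  rcases Nat.eq_zero_or_pos D.nStrands with hn | hn
  · exact ⟨⟨pc.seq, pc.bij, fun i => False.elim (by have := i.isLt; omega),
      fun i => False.elim (by have := i.isLt; omega),
      fun i => False.elim (by have := i.isLt; omega)⟩⟩
  have hex : ∀ (i : Fin D.nStrands), k ≤ i.val →
      ∃ (p : Fin D.chords) (l r : Fin D.nStrands), l < i ∧ r < i ∧
      ((D.src p = pc.seq l ∧ D.dst p = pc.seq i) ∨ (D.src p = pc.seq i ∧ D.dst p = pc.seq l)) ∧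
      D.tail p = pc.seq r := fun i hi => pc.move i (hk.trans hi)
  let par : ℕ → ℕ := fun i =>
    if h : ∃ (hi : i < D.nStrands), k ≤ i then
      ((hex ⟨i, h.choose⟩ h.choose_spec).choose_spec.choose : Fin D.nStrands).val
    else i - 1
  have hk0 : 0 < k := by
    by_contra h0
    have hk0 : k = 0 := by omega
    obtain ⟨p, l, r, hl, -⟩ := hex ⟨0, hn⟩ (by omega)
    exact Nat.not_lt_zero _ (Fin.lt_def.mp hl)
  have hpar : ∀ i, k ≤ i → par i < i := by
    intro i hi
    by_cases h : ∃ (hi : i < D.nStrands), k ≤ i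
    · have hv := Fin.lt_def.mp
        ((hex ⟨i, h.choose⟩ h.choose_spec).choose_spec.choose_spec.choose_spec.1)
      show dite _ _ _ < i
      rw [dif_pos h]
      exact hv
    · simp only [par, dif_neg h]; omega
  have hpeq : ∀ (i : Fin D.nStrands) (hi : k ≤ i.val),
      par i.val = ((hex i hi).choose_spec.choose : Fin D.nStrands).val := by
    intro i hi
    show dite _ _ _ = _
    rw [dif_pos ⟨i.isLt, hi⟩]
  refine ⟨⟨pc.seq, pc.bij,
    fun i => ⟨colAux k par hpar i.val, colAux_lt k par hpar i.val⟩, ?_, ?_⟩⟩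
  · intro i h
    exact Fin.ext (colAux_of_lt k par hpar i.val h)
  · intro i hi
    obtain ⟨p, l, r, hl, hr, hadj, htl⟩ := hex i hi
    refine ⟨(hex i hi).choose, (hex i hi).choose_spec.choose,
      (hex i hi).choose_spec.choose_spec.choose, ?_, ?_, ?_, ?_, ?_⟩
    · exact (hex i hi).choose_spec.choose_spec.choose_spec.1
    · exact (hex i hi).choose_spec.choose_spec.choose_spec.2.1
    · exact (hex i hi).choose_spec.choose_spec.choose_spec.2.2.1
    · exact (hex i hi).choose_spec.choose_spec.choose_spec.2.2.2
    · apply Fin.ext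
      show colAux k par hpar i.val = colAux k par hpar _
      rw [colAux_of_le k par hpar i.val hi, hpeq i hi]

end GDAux


section Del
open GaussDiagram
namespace GDAux

lemma strand_ext {E : GaussDiagram} {s t : E.Strand} (h1 : s.1 = t.1)
    (h2 : s.2.val = t.2.val) : s = t := by
  obtain ⟨c, j⟩ := s; obtain ⟨c', j'⟩ := t
  dsimp at h1 h2; subst h1
  exact congrArg (Sigma.mk c) (Fin.ext h2)

variable {D D' : GaussDiagram} {U : Fin D.circles}

def Fmap (eC : Fin D'.circles ≃ {c : Fin D.circles // c ≠ U})
    (hheads : ∀ c, D'.heads c = D.heads (eC c).1) (s : D'.Strand) : D.Strand :=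
  ⟨(eC s.1).1, ⟨s.2.val, by rw [← hheads s.1]; exact s.2.isLt⟩⟩

variable (eC : Fin D'.circles ≃ {c : Fin D.circles // c ≠ U})
  (hheads : ∀ c, D'.heads c = D.heads (eC c).1)

lemma Fmap_fst (s : D'.Strand) : (Fmap eC hheads s).1 = (eC s.1).1 := rfl
lemma Fmap_snd (s : D'.Strand) : ((Fmap eC hheads s).2 : ℕ) = (s.2 : ℕ) := rfl
lemma Fmap_ne (s : D'.Strand) : (Fmap eC hheads s).1 ≠ U := (eC s.1).2

lemma Fmap_next (s : D'.Strand) :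
    Fmap eC hheads (D'.next s) = D.next (Fmap eC hheads s) := by
  refine strand_ext rfl ?_
  show (s.2.val + 1) % D'.heads s.1 = (s.2.val + 1) % D.heads (eC s.1).1
  exact congrArg (fun t => (s.2.val + 1) % t) (hheads s.1)

/-- The strand correspondence as an equivalence. -/
def equivF : D'.Strand ≃ {s : D.Strand // s.1 ≠ U} where
  toFun s := ⟨Fmap eC hheads s, Fmap_ne eC hheads s⟩
  invFun s := ⟨eC.symm ⟨s.1.1, s.2⟩,
    ⟨s.1.2.val, by rw [hheads]; rw [Equiv.apply_symm_apply]; exact s.1.2.isLt⟩⟩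
  left_inv s := by
    refine strand_ext ?_ rfl
    show eC.symm ⟨(eC s.1).1, _⟩ = s.1
    rw [show (⟨(eC s.1).1, Fmap_ne eC hheads s⟩ : {c : Fin D.circles // c ≠ U}) = eC s.1
      from Subtype.ext rfl]
    exact eC.symm_apply_apply s.1
  right_inv s := by
    refine Subtype.ext (strand_ext ?_ rfl)
    show (eC (eC.symm ⟨s.1.1, s.2⟩)).1 = s.1.1
    rw [Equiv.apply_symm_apply]

lemma equivF_apply (s : D'.Strand) : (equivF eC hheads s : D.Strand) = Fmap eC hheads s := rfl

def equivU : {s : D.Strand // s.1 = U} ≃ Fin (D.heads U) where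
  toFun s := ⟨s.1.2.val, lt_of_lt_of_eq s.1.2.isLt (congrArg D.heads s.2)⟩
  invFun j := ⟨⟨U, j⟩, rfl⟩
  left_inv s := Subtype.ext (strand_ext s.2.symm rfl)
  right_inv j := rfl

include eC hheads in
lemma card_split : D.nStrands = D'.nStrands + D.heads U := by
  classical
  have h1 : Nat.card D.Strand =
      Nat.card {s : D.Strand // ¬ s.1 = U} + Nat.card {s : D.Strand // s.1 = U} := by
    rw [← Nat.card_sum]
    exact (Nat.card_congr ((Equiv.sumCompl (fun s : D.Strand => s.1 = U)).symm.trans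
      (Equiv.sumComm _ _)))
  have h2 : Nat.card {s : D.Strand // ¬ s.1 = U} = D'.nStrands :=
    Nat.card_congr ((Equiv.subtypeEquivRight (q := fun s : D.Strand => s.1 ≠ U)
      (fun _ => Iff.rfl)).trans (equivF eC hheads).symm)
  have h3 : Nat.card {s : D.Strand // s.1 = U} = D.heads U := by
    rw [Nat.card_congr (equivU (D := D) (U := U))]
    simp
  rw [nStrands, h1, h2, h3]

end GDAux
end Del


namespace GDAux
open GaussDiagram

variable {D D' : GaussDiagram} {U : Fin D.circles}
  (eC : Fin D'.circles ≃ {c : Fin D.circles // c ≠ U})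
  (hheads : ∀ c, D'.heads c = D.heads (eC c).1)
  (eP : Fin D'.chords ≃ {p : Fin D.chords // (D.headPos p).1 ≠ U})
  (hhp : ∀ p : Fin D'.chords,
      ((eC (D'.headPos p).1).1 = (D.headPos (eP p).1).1 ∧
        ((D'.headPos p).2 : ℕ) = ((D.headPos (eP p).1).2 : ℕ)))
  (htl : ∀ p : Fin D'.chords,
      ((eC (D'.tail p).1).1 = (D.tail (eP p).1).1 ∧
        ((D'.tail p).2 : ℕ) = ((D.tail (eP p).1).2 : ℕ)))
  (hloc : ∀ p : Fin D.chords, (D.tail p).1 = U ↔ (D.headPos p).1 = U)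

lemma Fmap_inj : Function.Injective (Fmap eC hheads) := by
  intro s t h
  have : equivF eC hheads s = equivF eC hheads t := Subtype.ext h
  exact (equivF eC hheads).injective this

include hhp in
lemma Fmap_headPos (q : Fin D'.chords) :
    Fmap eC hheads (D'.headPos q) = D.headPos (eP q).1 :=
  strand_ext (hhp q).1 (hhp q).2

include htl in
lemma Fmap_tail (q : Fin D'.chords) :
    Fmap eC hheads (D'.tail q) = D.tail (eP q).1 :=
  strand_ext (htl q).1 (htl q).2

include hhp in
lemma Fmap_src (q : Fin D'.chords) :
    Fmap eC hheads (D'.src q) = D.src (eP q).1 := Fmap_headPos eC hheads eP hhp q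

include hhp in
lemma Fmap_dst (q : Fin D'.chords) :
    Fmap eC hheads (D'.dst q) = D.dst (eP q).1 := by
  rw [dst, dst, Fmap_next, Fmap_src eC hheads eP hhp]

include htl hloc in
lemma ov_iff (s' : D'.Strand) :
    D'.IsOverbridge s' ↔ D.IsOverbridge (Fmap eC hheads s') := by
  constructor
  · rintro ⟨q, h⟩
    exact ⟨(eP q).1, by rw [← Fmap_tail eC hheads eP htl q, h]⟩
  · rintro ⟨p, h⟩
    have hne : (D.headPos p).1 ≠ U := by
      intro hU
      have : (D.tail p).1 = U := (hloc p).2 hU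
      rw [h] at this
      exact Fmap_ne eC hheads s' this
    refine ⟨eP.symm ⟨p, hne⟩, Fmap_inj eC hheads ?_⟩
    rw [Fmap_tail eC hheads eP htl]
    rw [eP.apply_symm_apply]
    exact h.trans rfl

lemma Fmap_symm (y : {s : D.Strand // s.1 ≠ U}) :
    Fmap eC hheads ((equivF eC hheads).symm y) = y.1 :=
  congrArg Subtype.val ((equivF eC hheads).apply_symm_apply y)

include eC hheads eP htl hloc in
lemma vb_split (hone : Nat.card {s : D.Strand // s.1 = U ∧ D.IsOverbridge s} = 1) :
    D.vb = D'.vb + 1 := by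
  classical
  have h1 : Nat.card {s : D.Strand // D.IsOverbridge s} =
      Nat.card {x : {s : D.Strand // D.IsOverbridge s} // ¬ (x : D.Strand).1 = U}
      + Nat.card {x : {s : D.Strand // D.IsOverbridge s} // (x : D.Strand).1 = U} := by
    rw [← Nat.card_sum]
    exact Nat.card_congr ((Equiv.sumCompl
      (fun x : {s : D.Strand // D.IsOverbridge s} => (x : D.Strand).1 = U)).symm.trans
      (Equiv.sumComm _ _))
  have h2 : Nat.card {x : {s : D.Strand // D.IsOverbridge s} // (x : D.Strand).1 = U} = 1 := by
    rw [← hone]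
    exact Nat.card_congr ((Equiv.subtypeSubtypeEquivSubtypeInter _ _).trans
      (Equiv.subtypeEquivRight (p := fun s : D.Strand => D.IsOverbridge s ∧ s.1 = U)
        (q := fun s : D.Strand => s.1 = U ∧ D.IsOverbridge s) (fun s => and_comm)))
  have g : {s' : D'.Strand // D'.IsOverbridge s'} ≃
      {s : D.Strand // D.IsOverbridge s ∧ ¬ s.1 = U} :=
    { toFun := fun s' => ⟨Fmap eC hheads s'.1,
        (ov_iff eC hheads eP htl hloc s'.1).1 s'.2, Fmap_ne eC hheads s'.1⟩
      invFun := fun x => ⟨(equivF eC hheads).symm ⟨x.1, x.2.2⟩, by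
        rw [ov_iff eC hheads eP htl hloc, Fmap_symm]
        exact x.2.1⟩
      left_inv := fun s' => Subtype.ext (by
        show (equivF eC hheads).symm ⟨Fmap eC hheads s'.1, _⟩ = s'.1
        exact (equivF eC hheads).symm_apply_apply s'.1)
      right_inv := fun x => Subtype.ext (Fmap_symm eC hheads _) }
  have h3 : Nat.card {x : {s : D.Strand // D.IsOverbridge s} // ¬ (x : D.Strand).1 = U}
      = D'.vb := by
    rw [vb]
    exact Nat.card_congr ((Equiv.subtypeSubtypeEquivSubtypeInter _ _).trans g.symm)
  rw [vb, h1, h2, h3]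

end GDAux


namespace GDAux
open GaussDiagram

lemma mod_calc1 {m : ℕ} (a j0 : ℕ) (ha : a < m) (hj : j0 < m) :
    ((a + j0) % m + m - j0) % m = a := by
  have h1 : (a + j0) % m + m - j0 = (a + j0) % m + (m - j0) := by omega
  rw [h1, Nat.mod_add_mod]
  have h2 : a + j0 + (m - j0) = a + m := by omega
  rw [h2, Nat.add_mod_right]
  exact Nat.mod_eq_of_lt ha

lemma mod_calc2 {m : ℕ} (s2 j0 : ℕ) (hs : s2 < m) (hj : j0 < m) :
    ((s2 + m - j0) % m + j0) % m = s2 := by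
  have h1 : s2 + m - j0 = s2 + (m - j0) := by omega
  rw [h1, Nat.mod_add_mod]
  have h2 : s2 + (m - j0) + j0 = s2 + m := by omega
  rw [h2, Nat.add_mod_right]
  exact Nat.mod_eq_of_lt hs

variable {D D' : GaussDiagram} {U : Fin D.circles}
  (eC : Fin D'.circles ≃ {c : Fin D.circles // c ≠ U})
  (hheads : ∀ c, D'.heads c = D.heads (eC c).1)
  (eP : Fin D'.chords ≃ {p : Fin D.chords // (D.headPos p).1 ≠ U})
  (hhp : ∀ p : Fin D'.chords,
      ((eC (D'.headPos p).1).1 = (D.headPos (eP p).1).1 ∧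
        ((D'.headPos p).2 : ℕ) = ((D.headPos (eP p).1).2 : ℕ)))
  (htl : ∀ p : Fin D'.chords,
      ((eC (D'.tail p).1).1 = (D.tail (eP p).1).1 ∧
        ((D'.tail p).2 : ℕ) = ((D.tail (eP p).1).2 : ℕ)))
  (hloc : ∀ p : Fin D.chords, (D.tail p).1 = U ↔ (D.headPos p).1 = U)
  (s0 : D.Strand) (hs0U : s0.1 = U)
  (hs0 : ∀ s : D.Strand, s.1 = U → D.IsOverbridge s → s = s0)

include eC hheads eP hhp htl hloc hs0U hs0 in
lemma upper (k : ℕ) (hk : k ≤ D'.nStrands) (mc : D'.MerColoring k) :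
    Nonempty (PreCol D (k + 1)) := by
  classical
  have hn : D.nStrands = D'.nStrands + D.heads U := card_split eC hheads
  set m := D.heads U with hmdef
  have hm : 0 < m := by
    have h1 := s0.2.isLt
    have h2 := congrArg D.heads hs0U
    omega
  have hj0lt : s0.2.val < m := by
    have h1 := s0.2.isLt
    have h2 := congrArg D.heads hs0U
    omega
  set j0 : ℕ := s0.2.val with hj0def
  have emc := Equiv.ofBijective mc.seq mc.bij
  -- the interleaved sequence
  set seqD : Fin D.nStrands → D.Strand := fun i =>
    if _h1 : i.val < k then Fmap eC hheads (mc.seq ⟨i.val, by omega⟩)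
    else if _h2 : i.val < k + m then
      ⟨U, ⟨(i.val - k + j0) % m, Nat.mod_lt _ hm⟩⟩
    else Fmap eC hheads (mc.seq ⟨i.val - m, by have := i.isLt; omega⟩) with hseqD
  have hlow : ∀ (i : Fin D.nStrands) (h : i.val < k),
      seqD i = Fmap eC hheads (mc.seq ⟨i.val, by omega⟩) := by
    intro i h; simp only [hseqD]; rw [dif_pos h]
  have hmid : ∀ (i : Fin D.nStrands) (h1 : ¬ i.val < k) (_h2 : i.val < k + m),
      seqD i = ⟨U, ⟨(i.val - k + j0) % m, Nat.mod_lt _ hm⟩⟩ := by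
    intro i h1 h2; simp only [hseqD]; rw [dif_neg h1, dif_pos h2]
  have hhigh : ∀ (i : Fin D.nStrands) (h2 : ¬ i.val < k + m),
      seqD i = Fmap eC hheads (mc.seq ⟨i.val - m, by have := i.isLt; omega⟩) := by
    intro i h2; simp only [hseqD]; rw [dif_neg (by omega : ¬ i.val < k), dif_neg h2]
  -- inverse function
  set emcs := (Equiv.ofBijective mc.seq mc.bij).symm with hemcs
  set invD : D.Strand → Fin D.nStrands := fun s =>
    if h : s.1 = U then
      ⟨k + (s.2.val + m - j0) % m, by
        have := Nat.mod_lt (s.2.val + m - j0) hm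
        omega⟩
    else
      (fun j : Fin D'.nStrands =>
        if j.val < k then (⟨j.val, by omega⟩ : Fin D.nStrands)
        else ⟨j.val + m, by omega⟩) (emcs ((equivF eC hheads).symm ⟨s, h⟩)) with hinvD
  have hinvU : ∀ (s : D.Strand) (_h : s.1 = U),
      (invD s).val = k + (s.2.val + m - j0) % m := by
    intro s h
    simp only [hinvD]
    rw [dif_pos h]
  have hinvN : ∀ (s : D.Strand) (h : ¬ s.1 = U),
      (invD s).val = (if (emcs ((equivF eC hheads).symm ⟨s, h⟩)).val < k
        then (emcs ((equivF eC hheads).symm ⟨s, h⟩)).val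
        else (emcs ((equivF eC hheads).symm ⟨s, h⟩)).val + m) := by
    intro s h
    simp only [hinvD]
    rw [dif_neg h]
    by_cases hc : (emcs ((equivF eC hheads).symm ⟨s, h⟩)).val < k
    · rw [if_pos hc, if_pos hc]
    · rw [if_neg hc, if_neg hc]
  have hemc_seq : ∀ x : Fin D'.nStrands, emcs (mc.seq x) = x := fun x =>
    (Equiv.ofBijective mc.seq mc.bij).symm_apply_apply x
  have hemcF : ∀ (x : Fin D'.nStrands) (hne : ¬ (Fmap eC hheads (mc.seq x)).1 = U),
      emcs ((equivF eC hheads).symm ⟨Fmap eC hheads (mc.seq x), hne⟩) = x := by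
    intro x hne
    have hE : (⟨Fmap eC hheads (mc.seq x), hne⟩ : {s : D.Strand // s.1 ≠ U}) =
        equivF eC hheads (mc.seq x) := Subtype.ext rfl
    rw [hE, Equiv.symm_apply_apply]
    exact hemc_seq x
  have hbij : Function.Bijective seqD := by
    rw [Function.bijective_iff_has_inverse]
    refine ⟨invD, ?_, ?_⟩
    · -- left inverse
      intro i
      apply Fin.ext
      by_cases h1 : i.val < k
      · rw [hlow i h1]
        have hne := Fmap_ne eC hheads (mc.seq ⟨i.val, by omega⟩)
        rw [hinvN _ hne, hemcF ⟨i.val, by omega⟩ hne]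
        rw [if_pos (show (⟨i.val, by omega⟩ : Fin D'.nStrands).val < k from h1)]
      · by_cases h2 : i.val < k + m
        · rw [hmid i h1 h2]
          rw [hinvU _ rfl]
          show k + (((i.val - k + j0) % m) + m - j0) % m = i.val
          rw [mod_calc1 (i.val - k) j0 (by omega) hj0lt]
          omega
        · rw [hhigh i h2]
          have hne := Fmap_ne eC hheads (mc.seq ⟨i.val - m, by have := i.isLt; omega⟩)
          rw [hinvN _ hne, hemcF ⟨i.val - m, by have := i.isLt; omega⟩ hne]
          rw [if_neg (show ¬ (⟨i.val - m, by have := i.isLt; omega⟩ :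
            Fin D'.nStrands).val < k by show ¬ i.val - m < k; omega)]
          show i.val - m + m = i.val
          omega
    · -- right inverse
      intro s
      by_cases h : s.1 = U
      · have hv := hinvU s h
        have hlt : (s.2.val + m - j0) % m < m := Nat.mod_lt _ hm
        rw [hmid (invD s) (by omega) (by omega)]
        refine strand_ext h.symm ?_
        show ((invD s).val - k + j0) % m = s.2.val
        rw [hv]
        have hsl : s.2.val < m := by
          have h1 := s.2.isLt
          have h2 := congrArg D.heads h
          omega
        have : k + (s.2.val + m - j0) % m - k = (s.2.val + m - j0) % m := by omega
        rw [this]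
        exact mod_calc2 s.2.val j0 hsl hj0lt
      · have hv := hinvN s h
        set j := emcs ((equivF eC hheads).symm ⟨s, h⟩) with hjdef
        have hFj : Fmap eC hheads (mc.seq j) = s := by
          have : mc.seq j = (equivF eC hheads).symm ⟨s, h⟩ := by
            rw [hjdef]
            exact (Equiv.ofBijective mc.seq mc.bij).apply_symm_apply _
          rw [this]
          exact Fmap_symm eC hheads _
        by_cases hj : j.val < k
        · rw [if_pos hj] at hv
          rw [hlow (invD s) (by omega)]
          refine Eq.trans (congrArg (Fmap eC hheads)
            (congrArg mc.seq (Fin.ext ?_))) hFj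
          show (invD s).val = j.val
          omega
        · rw [if_neg hj] at hv
          have hjlt := j.isLt
          rw [hhigh (invD s) (by omega)]
          refine Eq.trans (congrArg (Fmap eC hheads)
            (congrArg mc.seq (Fin.ext ?_))) hFj
          show (invD s).val - m = j.val
          omega
  -- the moves
  refine ⟨⟨seqD, hbij, ?_⟩⟩
  intro i hi
  by_cases h2 : i.val < k + m
  · -- middle region, i.val ≥ k + 1
    have hik : ¬ i.val < k := by omega
    have hl1 : i.val - 1 < D.nStrands := by have := i.isLt; omega
    set l : Fin D.nStrands := ⟨i.val - 1, hl1⟩ with hldef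
    have hlm : seqD l = ⟨U, ⟨(i.val - 1 - k + j0) % m, Nat.mod_lt _ hm⟩⟩ :=
      hmid l (by show ¬ i.val - 1 < k; omega) (by show i.val - 1 < k + m; omega)
    obtain ⟨p, hp⟩ := D.headBij.2 (seqD l)
    have hpU : (D.headPos p).1 = U := by rw [hp, hlm]
    have hkpos : k < D.nStrands := by omega
    refine ⟨p, l, ⟨k, hkpos⟩, by rw [Fin.lt_def]; show i.val - 1 < i.val; omega,
      by rw [Fin.lt_def]; show k < i.val; omega, Or.inl ⟨hp, ?_⟩, ?_⟩
    · -- dst p = seqD i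
      rw [dst, src, hp, hlm, hmid i hik h2]
      refine strand_ext rfl ?_
      show ((i.val - 1 - k + j0) % m + 1) % m = (i.val - k + j0) % m
      rw [Nat.mod_add_mod]
      congr 1
      omega
    · -- tail p = seqD ⟨k⟩
      have htU : (D.tail p).1 = U := (hloc p).2 hpU
      have := hs0 (D.tail p) htU ⟨p, rfl⟩
      rw [this, hmid ⟨k, hkpos⟩ (by show ¬ k < k; omega) (by show k < k + m; omega)]
      refine (strand_ext hs0U.symm ?_).symm
      show (k - k + j0) % m = s0.2.val
      have : k - k + j0 = j0 := by omega
      rw [this]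
      exact Nat.mod_eq_of_lt hj0lt
  · -- high region: use the move of mc
    have hj1 : i.val - m < D'.nStrands := by have := i.isLt; omega
    set jj : Fin D'.nStrands := ⟨i.val - m, hj1⟩ with hjjdef
    obtain ⟨q, l', r', hl', hr', hadj, htq, -⟩ := mc.move jj (by show k ≤ i.val - m; omega)
    set lift : Fin D'.nStrands → Fin D.nStrands := fun x =>
      if x.val < k then ⟨x.val, by omega⟩ else ⟨x.val + m, by omega⟩ with hliftdef
    have hliftseq : ∀ x : Fin D'.nStrands, seqD (lift x) = Fmap eC hheads (mc.seq x) := by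
      intro x
      by_cases hx : x.val < k
      · simp only [hliftdef, if_pos hx]
        rw [hlow _ hx]
      · simp only [hliftdef, if_neg hx]
        rw [hhigh _ (by show ¬ x.val + m < k + m; omega)]
        exact congrArg (Fmap eC hheads) (congrArg mc.seq (Fin.ext
          (by show x.val + m - m = x.val; omega)))
    have hliftlt : ∀ x : Fin D'.nStrands, x < jj → lift x < i := by
      intro x hx
      rw [Fin.lt_def] at hx ⊢
      simp only [hliftdef]
      by_cases hxk : x.val < k
      · rw [if_pos hxk]; show x.val < i.val; omega
      · rw [if_neg hxk]; show x.val + m < i.val; simp only [hjjdef] at hx; omega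
    have hseqi : seqD i = Fmap eC hheads (mc.seq jj) := by
      rw [hhigh i h2]
    refine ⟨(eP q).1, lift l', lift r', hliftlt l' hl', hliftlt r' hr', ?_, ?_⟩
    · rcases hadj with ⟨ha, hb⟩ | ⟨ha, hb⟩
      · left
        constructor
        · rw [← Fmap_src eC hheads eP hhp, ha, hliftseq]
        · rw [← Fmap_dst eC hheads eP hhp, hb, hseqi]
      · right
        constructor
        · rw [← Fmap_src eC hheads eP hhp, ha, hseqi]
        · rw [← Fmap_dst eC hheads eP hhp, hb, hliftseq]
    · rw [← Fmap_tail eC hheads eP htl, htq, hliftseq]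

end GDAux


namespace GDAux
open GaussDiagram

variable {D D' : GaussDiagram} {U : Fin D.circles}
  (eC : Fin D'.circles ≃ {c : Fin D.circles // c ≠ U})
  (hheads : ∀ c, D'.heads c = D.heads (eC c).1)
  (eP : Fin D'.chords ≃ {p : Fin D.chords // (D.headPos p).1 ≠ U})
  (hhp : ∀ p : Fin D'.chords,
      ((eC (D'.headPos p).1).1 = (D.headPos (eP p).1).1 ∧
        ((D'.headPos p).2 : ℕ) = ((D.headPos (eP p).1).2 : ℕ)))
  (htl : ∀ p : Fin D'.chords,
      ((eC (D'.tail p).1).1 = (D.tail (eP p).1).1 ∧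
        ((D'.tail p).2 : ℕ) = ((D.tail (eP p).1).2 : ℕ)))
  (hloc : ∀ p : Fin D.chords, (D.tail p).1 = U ↔ (D.headPos p).1 = U)
  (s0 : D.Strand) (hs0U : s0.1 = U)

include eC hheads eP hhp htl hloc hs0U in
lemma lower (k : ℕ) (hkn : k ≤ D.nStrands) (mc : D.MerColoring k) :
    ∃ t, t + 1 ≤ k ∧ Nonempty (PreCol D' t) := by
  classical
  set n := D.nStrands with hndef
  set A : Finset (Fin D.nStrands) :=
    Finset.univ.filter (fun i => ¬ (mc.seq i).1 = U) with hAdef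
  have hmemA : ∀ i, i ∈ A ↔ ¬ (mc.seq i).1 = U := by
    intro i; rw [hAdef, Finset.mem_filter]; simp
  have hAcard : A.card = D'.nStrands := by
    rw [hAdef, ← Fintype.card_subtype]
    have e1 : {i : Fin D.nStrands // ¬ (mc.seq i).1 = U} ≃ {s : D.Strand // s.1 ≠ U} :=
      (Equiv.ofBijective mc.seq mc.bij).subtypeEquiv (fun i => Iff.rfl)
    rw [← Nat.card_eq_fintype_card, Nat.card_congr (e1.trans (equivF eC hheads).symm)]
    rfl
  set enum := A.orderIsoOfFin hAcard with henumdef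
  set seq' : Fin D'.nStrands → D'.Strand := fun j =>
    (equivF eC hheads).symm ⟨mc.seq (enum j).1, (hmemA (enum j).1).1 (enum j).2⟩ with hseq'def
  have hFseq' : ∀ j, Fmap eC hheads (seq' j) = mc.seq (enum j).1 := by
    intro j
    rw [hseq'def]
    exact Fmap_symm eC hheads _
  have hinj : Function.Injective seq' := by
    intro j j' h
    have h2 : mc.seq (enum j).1 = mc.seq (enum j').1 := by
      rw [← hFseq', ← hFseq', h]
    have h3 : (enum j).1 = (enum j').1 := mc.bij.1 h2
    exact enum.injective (Subtype.ext h3)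
  have hbij : Function.Bijective seq' := by
    refine (Fintype.bijective_iff_injective_and_card seq').2 ⟨hinj, ?_⟩
    rw [Fintype.card_fin, ← Nat.card_eq_fintype_card]
    rfl
  set t := (A.filter (fun i => i.val < k)).card with htdef
  -- positions in the enumeration at index ≥ t sit at positions ≥ k in mc
  have key1 : ∀ j : Fin D'.nStrands, t ≤ j.val → k ≤ ((enum j : Fin D.nStrands)).val := by
    intro j hj
    by_contra hlt
    push_neg at hlt
    have hsub : (Finset.Iic j).image (fun j' => (enum j' : Fin D.nStrands)) ⊆
        A.filter (fun i => i.val < k) := by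
      intro x hx
      rw [Finset.mem_image] at hx
      obtain ⟨j', hj', rfl⟩ := hx
      rw [Finset.mem_Iic] at hj'
      rw [Finset.mem_filter]
      refine ⟨(enum j').2, ?_⟩
      have hle : (enum j' : Fin D.nStrands) ≤ (enum j : Fin D.nStrands) :=
        Subtype.coe_le_coe.2 (enum.monotone hj')
      exact lt_of_le_of_lt hle hlt
    have hcard := Finset.card_le_card hsub
    have hinj2 : Function.Injective (fun j' => ((enum j' : Fin D.nStrands))) :=
      fun a b h => enum.injective (Subtype.ext h)
    rw [Finset.card_image_of_injective _ hinj2, Fin.card_Iic] at hcard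
    omega
  have key2 : ∀ j j' : Fin D'.nStrands,
      (enum j : Fin D.nStrands) < (enum j' : Fin D.nStrands) → j < j' := by
    intro j j' h
    have := Subtype.coe_lt_coe.1 h
    exact enum.lt_iff_lt.1 this
  -- the pre-coloring of D'
  have hpc : Nonempty (PreCol D' t) := by
    refine ⟨⟨seq', hbij, ?_⟩⟩
    intro j hj
    set i : Fin D.nStrands := (enum j : Fin D.nStrands) with hidef
    have hik : k ≤ i.val := key1 j hj
    obtain ⟨p, l, r, hl, hr, hadj, htp, -⟩ := mc.move i hik
    have hiU : ¬ (mc.seq i).1 = U := (hmemA i).1 (enum j).2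
    have hPne : (D.headPos p).1 ≠ U := by
      rcases hadj with ⟨-, hb⟩ | ⟨ha, -⟩
      · intro hU; apply hiU; rw [← hb]; exact hU
      · intro hU; apply hiU; rw [← ha]; exact hU
    have hlne : ¬ (mc.seq l).1 = U := by
      rcases hadj with ⟨ha, -⟩ | ⟨-, hb⟩
      · intro hU; apply hPne; rw [← ha] at hU; exact hU
      · intro hU; apply hPne; rw [← hb] at hU; exact hU
    have htne : ¬ (D.tail p).1 = U := fun hU => hPne ((hloc p).1 hU)
    have hlA : l ∈ A := (hmemA l).2 hlne
    have hrA : r ∈ A := (hmemA r).2 (by rw [← htp]; exact htne)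
    set jl := enum.symm ⟨l, hlA⟩ with hjldef
    set jr := enum.symm ⟨r, hrA⟩ with hjrdef
    have henl : (enum jl : Fin D.nStrands) = l :=
      congrArg Subtype.val (enum.apply_symm_apply ⟨l, hlA⟩)
    have henr : (enum jr : Fin D.nStrands) = r :=
      congrArg Subtype.val (enum.apply_symm_apply ⟨r, hrA⟩)
    have hjl : jl < j := key2 jl j (by rw [henl]; exact hl)
    have hjr : jr < j := key2 jr j (by rw [henr]; exact hr)
    set q := eP.symm ⟨p, hPne⟩ with hqdef
    have hq : ((eP q) : Fin D.chords) = p := by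
      rw [hqdef, Equiv.apply_symm_apply]
    have hFl : Fmap eC hheads (seq' jl) = mc.seq l := by rw [hFseq', henl]
    have hFr : Fmap eC hheads (seq' jr) = mc.seq r := by rw [hFseq', henr]
    have hFj : Fmap eC hheads (seq' j) = mc.seq i := hFseq' j
    refine ⟨q, jl, jr, hjl, hjr, ?_, ?_⟩
    · rcases hadj with ⟨ha, hb⟩ | ⟨ha, hb⟩
      · left
        constructor
        · apply Fmap_inj eC hheads
          rw [Fmap_src eC hheads eP hhp, hq, ha, hFl]
        · apply Fmap_inj eC hheads
          rw [Fmap_dst eC hheads eP hhp, hq, hb, hFj]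
      · right
        constructor
        · apply Fmap_inj eC hheads
          rw [Fmap_src eC hheads eP hhp, hq, ha, hFj]
        · apply Fmap_inj eC hheads
          rw [Fmap_dst eC hheads eP hhp, hq, hb, hFl]
    · apply Fmap_inj eC hheads
      rw [Fmap_tail eC hheads eP htl, hq, htp, hFr]
  -- bound on the number of seeds used off U
  set B : Finset (Fin D.nStrands) :=
    Finset.univ.filter (fun i => (mc.seq i).1 = U) with hBdef
  have hmemB : ∀ i, i ∈ B ↔ (mc.seq i).1 = U := by
    intro i; rw [hBdef, Finset.mem_filter]; simp
  have hBne : B.Nonempty := by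
    refine ⟨(Equiv.ofBijective mc.seq mc.bij).symm s0, (hmemB _).2 ?_⟩
    have : mc.seq ((Equiv.ofBijective mc.seq mc.bij).symm s0) = s0 :=
      (Equiv.ofBijective mc.seq mc.bij).apply_symm_apply s0
    rw [this, hs0U]
  set istar := B.min' hBne with histar
  have hstarU : (mc.seq istar).1 = U := (hmemB istar).1 (B.min'_mem hBne)
  have hstark : istar.val < k := by
    by_contra hcon
    push_neg at hcon
    obtain ⟨p, l, r, hl, hr, hadj, htp, -⟩ := mc.move istar hcon
    have hPU : (D.headPos p).1 = U := by
      rcases hadj with ⟨-, hb⟩ | ⟨ha, -⟩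
      · rw [← hb] at hstarU; exact hstarU
      · rw [← ha] at hstarU; exact hstarU
    have hrB : r ∈ B := (hmemB r).2 (by rw [← htp]; exact (hloc p).2 hPU)
    exact absurd (B.min'_le r hrB) (not_le.2 hr)
  have histarA : istar ∉ A.filter (fun i => i.val < k) := by
    intro hmem
    rw [Finset.mem_filter] at hmem
    exact (hmemA istar).1 hmem.1 hstarU
  have hsub2 : A.filter (fun i => i.val < k) ⊆
      (Finset.univ.filter (fun i : Fin D.nStrands => i.val < k)).erase istar := by
    intro x hx
    rw [Finset.mem_erase]
    rw [Finset.mem_filter] at hx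
    refine ⟨?_, Finset.mem_filter.2 ⟨Finset.mem_univ x, hx.2⟩⟩
    intro hxe
    exact histarA (by rw [← hxe] at *; exact Finset.mem_filter.2 hx)
  have hcardk : (Finset.univ.filter (fun i : Fin D.nStrands => i.val < k)).card = k := by
    rw [← Fintype.card_subtype]
    have e : {i : Fin D.nStrands // i.val < k} ≃ Fin k :=
      ⟨fun x => ⟨x.1.val, x.2⟩, fun y => ⟨⟨y.val, lt_of_lt_of_le y.isLt hkn⟩, y.isLt⟩,
        fun x => Subtype.ext (Fin.ext rfl), fun y => Fin.ext rfl⟩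
    rw [Fintype.card_congr e, Fintype.card_fin]
  have hts : t ≤ k - 1 := by
    have h1 := Finset.card_le_card hsub2
    rw [Finset.card_erase_of_mem
      (Finset.mem_filter.2 ⟨Finset.mem_univ istar, hstark⟩), hcardk] at h1
    exact h1
  exact ⟨t, by omega, hpc⟩

end GDAux


namespace GDAux
open GaussDiagram

lemma exists_coloring (E : GaussDiagram) : Nonempty (E.MerColoring E.nStrands) := by
  have h : E.nStrands = Fintype.card E.Strand := Nat.card_eq_fintype_card
  have pc : PreCol E E.nStrands :=
    ⟨⇑((finCongr h).trans (Fintype.equivFin E.Strand).symm),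
      Equiv.bijective _, fun i hi => absurd i.isLt (not_lt.2 hi)⟩
  exact pad pc le_rfl

end GDAux

open GaussDiagram in
/-- Let `D` be a cut-split Gauss diagram (each circle carrying an arrowtail) in
which the circle component `U` contains exactly one overbridge, all chords with
an endpoint on `U` having both endpoints on `U`.  Then deleting `U` decreases
both the Wirtinger number and the bridge number by exactly one. -/
theorem wirt_vb_of_delete_cutSplit_component (D : GaussDiagram)
    (hcs : D.CutSplit) (U : Fin D.circles)
    (htails : ∀ c : Fin D.circles, ∃ p : Fin D.chords, (D.tail p).1 = c)
    (hloc : ∀ p : Fin D.chords, (D.tail p).1 = U ↔ (D.headPos p).1 = U)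
    (hone : Nat.card {s : D.Strand // s.1 = U ∧ D.IsOverbridge s} = 1)
    (D' : GaussDiagram) (hdel : IsDeletion D U D') :
    D.wirt = D'.wirt + 1 ∧ D.vb = D'.vb + 1 := by
  classical
  obtain ⟨eC, eP, hheads, hhp, htl, hsign⟩ := hdel
  have hone' := hone
  rw [Nat.card_eq_one_iff_unique] at hone'
  obtain ⟨hsub, hne⟩ := hone'
  obtain ⟨⟨s0, hs0U, hs0ov⟩⟩ := hne
  have hs0 : ∀ s : D.Strand, s.1 = U → D.IsOverbridge s → s = s0 := by
    intro s h1 h2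
    exact congrArg Subtype.val (hsub.elim
      (⟨s, h1, h2⟩ : {s : D.Strand // s.1 = U ∧ D.IsOverbridge s}) ⟨s0, hs0U, hs0ov⟩)
  have hvb : D.vb = D'.vb + 1 := GDAux.vb_split eC hheads eP htl hloc hone
  have hw1 : D.wirt ≤ D.nStrands := Nat.sInf_le (GDAux.exists_coloring D)
  have hw1' : D'.wirt ≤ D'.nStrands := Nat.sInf_le (GDAux.exists_coloring D')
  have hmem' : Nonempty (D'.MerColoring D'.wirt) :=
    Nat.sInf_mem (⟨D'.nStrands, GDAux.exists_coloring D'⟩ :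
      {k | Nonempty (D'.MerColoring k)}.Nonempty)
  have hmem : Nonempty (D.MerColoring D.wirt) :=
    Nat.sInf_mem (⟨D.nStrands, GDAux.exists_coloring D⟩ :
      {k | Nonempty (D.MerColoring k)}.Nonempty)
  obtain ⟨mc'⟩ := hmem'
  obtain ⟨mc⟩ := hmem
  obtain ⟨pcU⟩ := GDAux.upper eC hheads eP hhp htl hloc s0 hs0U hs0 D'.wirt hw1' mc'
  have hle1 : D.wirt ≤ D'.wirt + 1 := Nat.sInf_le (GDAux.pad pcU le_rfl)
  obtain ⟨t, htk, hpc⟩ := GDAux.lower eC hheads eP hhp htl hloc s0 hs0U D.wirt hw1 mc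
  have hle2 : D'.wirt ≤ D.wirt - 1 :=
    Nat.sInf_le (GDAux.pad hpc.some (by omega : t ≤ D.wirt - 1))
  exact ⟨by omega, hvb⟩
end

section
/- If K is a virtual knot with virtual bridge number 1 and X is any finite quandle, then K admits exactly |X| quandle colorings by X, all of which are constant (trivial). -/
open GaussDiagram in
/-- A quandle coloring of a Gauss diagram: an assignment of quandle elements to
strands satisfying the (signed) quandle relation at every chord. -/
def IsQuandleColoring (D : GaussDiagram) {X : Type*} [Quandle X]
    (φ : D.Strand → X) : Prop :=
  ∀ p : Fin D.chords,
    φ (D.dst p) =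
      if D.sign p then Shelf.act (φ (D.tail p)) (φ (D.src p))
      else Rack.invAct (φ (D.tail p)) (φ (D.src p))

open GaussDiagram in
/-- If `K` is a virtual knot of virtual bridge number one, presented by a Gauss
diagram `D` with exactly one overbridge, and `X` is any finite quandle, then
`D` admits exactly `|X|` quandle colorings by `X`, all of which are constant. -/
theorem one_bridge_quandle_colorings (D : GaussDiagram) (hknot : D.circles = 1)
    (hvb : D.vb = 1) (X : Type) [Quandle X] [Fintype X] :
    Nat.card {φ : D.Strand → X // IsQuandleColoring D φ} = Fintype.card X ∧
    ∀ φ : D.Strand → X, IsQuandleColoring D φ → ∃ a : X, φ = fun _ => a := by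
  -- all circles form a subsingleton
  haveI hsub : Subsingleton (Fin D.circles) := by
    rw [hknot]; infer_instance
  -- the unique overbridge
  obtain ⟨huniq, ⟨⟨b, hb⟩⟩⟩ :
      Subsingleton {s : D.Strand // D.IsOverbridge s} ∧
      Nonempty {s : D.Strand // D.IsOverbridge s} :=
    Nat.card_eq_one_iff_unique.mp hvb
  have htail : ∀ p : Fin D.chords, D.tail p = b := by
    intro p
    have : (⟨D.tail p, ⟨p, rfl⟩⟩ : {s : D.Strand // D.IsOverbridge s}) = ⟨b, hb⟩ :=
      Subsingleton.elim _ _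
    exact congrArg Subtype.val this
  set n := D.heads b.1 with hn
  have hnpos : 0 < n := lt_of_le_of_lt (Nat.zero_le _) b.2.isLt
  -- key step
  have step : ∀ (φ : D.Strand → X), IsQuandleColoring D φ →
      ∀ s : D.Strand, φ s = φ b → φ (D.next s) = φ b := by
    intro φ hφ s hs
    obtain ⟨p, hp⟩ := D.headBij.2 s
    have h1 : D.src p = s := hp
    have h2 : D.dst p = D.next s := by rw [dst, h1]
    have := hφ p
    rw [h1, h2, htail, hs] at this
    rw [this]
    split <;> simp [Quandle.fix, Quandle.fix_inv]
  -- colorings are constant along the circle from b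
  have key : ∀ (φ : D.Strand → X), IsQuandleColoring D φ →
      ∀ m : ℕ, φ ⟨b.1, ⟨(b.2.val + m) % n, Nat.mod_lt _ hnpos⟩⟩ = φ b := by
    intro φ hφ m
    induction m with
    | zero =>
        have h0 : (b.2.val + 0) % n = b.2.val := by
          rw [Nat.add_zero]; exact Nat.mod_eq_of_lt b.2.isLt
        exact congrArg (fun x : Fin (D.heads b.1) => φ ⟨b.1, x⟩) (Fin.ext h0)
    | succ m ih =>
        have hst : (⟨b.1, ⟨(b.2.val + (m+1)) % n, Nat.mod_lt _ hnpos⟩⟩ : D.Strand) =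
            D.next ⟨b.1, ⟨(b.2.val + m) % n, Nat.mod_lt _ hnpos⟩⟩ := by
          show _ = (⟨b.1, ⟨((b.2.val + m) % n + 1) % n, _⟩⟩ : D.Strand)
          congr 1
          apply Fin.ext
          show (b.2.val + (m+1)) % n = ((b.2.val + m) % n + 1) % n
          rw [Nat.mod_add_mod, Nat.add_assoc]
        rw [hst]
        exact step φ hφ _ ih
  -- every strand is reached
  have const : ∀ (φ : D.Strand → X), IsQuandleColoring D φ →
      ∀ t : D.Strand, φ t = φ b := by
    intro φ hφ t
    obtain ⟨c, j⟩ := t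
    obtain rfl : b.1 = c := Subsingleton.elim _ _
    have hj : j.val < n := j.isLt
    have hm : (b.2.val + (n - b.2.val + j.val)) % n = j.val := by
      have hb2 : b.2.val < n := b.2.isLt
      have : b.2.val + (n - b.2.val + j.val) = n + j.val := by omega
      rw [this, Nat.add_mod_left, Nat.mod_eq_of_lt hj]
    have := key φ hφ (n - b.2.val + j.val)
    rwa [show (⟨b.1, ⟨(b.2.val + (n - b.2.val + j.val)) % n, Nat.mod_lt _ hnpos⟩⟩ : D.Strand)
        = ⟨b.1, j⟩ from congrArg (fun x => (⟨b.1, x⟩ : D.Strand)) (Fin.ext hm)] at this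
  -- constant maps are colorings
  have constCol : ∀ a : X, IsQuandleColoring D (fun _ => a) := by
    intro a p
    split <;> simp [Quandle.fix, Quandle.fix_inv]
  constructor
  · have e : {φ : D.Strand → X // IsQuandleColoring D φ} ≃ X :=
      { toFun := fun φ => φ.1 b
        invFun := fun a => ⟨fun _ => a, constCol a⟩
        left_inv := fun φ => Subtype.ext (funext fun t => (const φ.1 φ.2 t).symm)
        right_inv := fun a => rfl }
    rw [Nat.card_congr e, Nat.card_eq_fintype_card]
  · intro φ hφ
    exact ⟨φ b, funext fun t => const φ hφ t⟩
end
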